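/- arXiv:2405.10827 — 5 statements merged into one kernel-verified Lean document; each statement's English description precedes it below -/
import Mathlib

section
/- Let p be a prime and let S^{(p)}(n1,n2,m1,m2;p,p) be the GL(3) Kloosterman sum with level-p condition, i.e. the sum over B1,C1 mod p and B2,C2 mod p with D1=D2=p, satisfying pC2+B1B2+pC1 ≡ 0 mod p^2, gcd(Bj,Cj,p)=1, p | B1, of e((n1 B1 + m1(Y1 p − Z1 B2))/p + (n2 B2 + m2(Y2 p − Z2 B1))/p) where Yj Bj + Zj Cj ≡ 1 mod p. Then S^{(p)}(n1,n2,m1,m2;p,p) = p−1 + r_p(m1) r_p(n2), where r_p denotes the Ramanujan sum mod p. In particular it equals p(p−1) if p | m1 and p | n2, equals p if p ∤ m1 n2, and equals 0 otherwise. -/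
open Finset

/-- `e(x) = exp(2πix)`. -/
noncomputable def eChar (x : ℝ) : ℂ := Complex.exp (2 * Real.pi * Complex.I * x)

/-- Ramanujan sum `r_q(n) = Σ_{a mod q, (a,q)=1} e(an/q)`. -/
noncomputable def ramanujanSum (q : ℕ) (n : ℤ) : ℂ :=
  ∑ a ∈ Finset.range q, if Nat.gcd a q = 1 then eChar ((a : ℝ) * (n : ℝ) / q) else 0

/-- The GL(3) Kloosterman sum `S^{(N)}(n1,n2,m1,m2;D1,D2)`.  The summand is independent of
the choice of `(Y_j, Z_j)` with `Y_j B_j + Z_j C_j ≡ 1 mod D_j`; since there are exactly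
`D_j` such pairs modulo `D_j`, we sum over all of them and divide by `D1 * D2`. -/
noncomputable def Kloosterman3 (N : ℕ) (n1 n2 m1 m2 : ℤ) (D1 D2 : ℕ) : ℂ :=
  (1 / ((D1 : ℂ) * (D2 : ℂ))) *
  ∑ B1 ∈ range D1, ∑ C1 ∈ range D1, ∑ Y1 ∈ range D1, ∑ Z1 ∈ range D1,
  ∑ B2 ∈ range D2, ∑ C2 ∈ range D2, ∑ Y2 ∈ range D2, ∑ Z2 ∈ range D2,
    if ((D1 : ℤ) * C2 + (B1 : ℤ) * B2 + (D2 : ℤ) * C1) % ((D1 : ℤ) * D2) = 0 ∧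
       Nat.gcd (Nat.gcd B1 C1) D1 = 1 ∧ Nat.gcd (Nat.gcd B2 C2) D2 = 1 ∧
       (N : ℤ) ∣ (B1 : ℤ) ∧
       ((Y1 : ℤ) * B1 + (Z1 : ℤ) * C1) % (D1 : ℤ) = 1 % (D1 : ℤ) ∧
       ((Y2 : ℤ) * B2 + (Z2 : ℤ) * C2) % (D2 : ℤ) = 1 % (D2 : ℤ) then
      eChar (((n1 * B1 + m1 * ((Y1 : ℤ) * D2 - (Z1 : ℤ) * B2) : ℤ) : ℝ) / D1 +
             ((n2 * B2 + m2 * ((Y2 : ℤ) * D1 - (Z2 : ℤ) * B1) : ℤ) : ℝ) / D2)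
    else 0

/-!
Since `p ∣ B1` and `0 ≤ B1 < p`, only `B1 = 0` contributes. The congruences then say that `C1`
is a unit mod `p`, `Z1 = C1⁻¹`, `C2 = -C1` and `Z2 = (Y2 B2 - 1) C1⁻¹`, while `Y1`, `Y2`, `B2`
are free; the `p²` choices of `(Y1, Y2)` cancel the normalisation of `Kloosterman3`. The phase is
`e(B2 (n2 - m1 C1⁻¹) / p)`, so orthogonality in `B2` gives `S = p · #{c ≠ 0 : m1 c⁻¹ ≡ n2}`, and
this count matches `p - 1 + r_p(m1) r_p(n2)` because `r_p(n) = p · [p ∣ n] - 1`.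
-/

open ZMod

theorem Finset.sum_range_natCast_zmod {M : Type*} [AddCommMonoid M] (N : ℕ) [NeZero N]
    (f : ZMod N → M) : ∑ x ∈ range N, f x = ∑ x, f x := by
  symm
  refine Finset.sum_nbij' ZMod.val (fun n => (n : ZMod N)) ?_ ?_ ?_ ?_ ?_ <;>
    simp +contextual [ZMod.val_lt, Nat.mod_eq_of_lt]

theorem eChar_intCast_div (N : ℕ) [NeZero N] (a : ℤ) :
    eChar (a / N) = stdAddChar (a : ZMod N) := by
  rw [stdAddChar_coe, eChar]
  push_cast
  ring_nf

theorem ramanujanSum_eq_sum_isUnit (q : ℕ) [NeZero q] (n : ℤ) :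
    ramanujanSum q n = ∑ x : ZMod q, if IsUnit x then stdAddChar (x * (n : ZMod q)) else 0 := by
  rw [ramanujanSum, ← sum_range_natCast_zmod]
  refine sum_congr rfl fun a _ => if_congr (isUnit_iff_coprime a q).symm ?_ rfl
  convert eChar_intCast_div q (a * n) using 2 <;> push_cast <;> ring

theorem Int.emod_eq_one_emod_iff_zmod {p : ℕ} (x : ℤ) : x % p = 1 % p ↔ (x : ZMod p) = 1 := by
  rw [← ZMod.intCast_eq_intCast_iff', Int.cast_one]

theorem mul_add_mul_emod_mul_self_eq_zero_iff {p : ℕ} [NeZero p] (c1 c2 : ℕ) :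
    ((p : ℤ) * c2 + (p : ℤ) * c1) % ((p : ℤ) * p) = 0 ↔ (c1 + c2 : ZMod p) = 0 := by
  have hp : (p : ℤ) ≠ 0 := by exact_mod_cast NeZero.ne p
  rw [← Int.dvd_iff_emod_eq_zero, ← mul_add, mul_dvd_mul_iff_left hp, add_comm,
    ← ZMod.intCast_zmod_eq_zero_iff_dvd]
  push_cast
  rfl

theorem kloosterman_constraints_iff {F : Type*} [Field F] {c1 z1 b2 c2 y2 z2 : F} :
    (c1 + c2 = 0 ∧ c1 ≠ 0 ∧ ¬(b2 = 0 ∧ c2 = 0) ∧ z1 * c1 = 1 ∧ y2 * b2 + z2 * c2 = 1) ↔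
      (c1 ≠ 0 ∧ z1 = c1⁻¹ ∧ c2 = -c1 ∧ z2 = (y2 * b2 - 1) * z1) := by
  constructor
  · rintro ⟨hc2, hc1, -, hz1, hline⟩
    refine ⟨hc1, eq_inv_of_mul_eq_one_left hz1, (neg_eq_of_add_eq_zero_right hc2).symm, ?_⟩
    linear_combination -z1 * hline - z2 * hz1 + z2 * z1 * hc2
  · rintro ⟨hc1, rfl, rfl, rfl⟩
    refine ⟨add_neg_cancel c1, hc1, by simp [hc1], inv_mul_cancel₀ hc1, ?_⟩
    field_simp
    ring

theorem kloosterman3_phase_eq_stdAddChar {p : ℕ} [NeZero p] (n1 n2 m1 m2 : ℤ) {B1 : ℕ}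
    (hB1 : (B1 : ZMod p) = 0) (Y1 Z1 B2 Y2 Z2 : ℕ) :
    eChar (((n1 * B1 + m1 * ((Y1 : ℤ) * p - (Z1 : ℤ) * B2) : ℤ) : ℝ) / p +
      ((n2 * B2 + m2 * ((Y2 : ℤ) * p - (Z2 : ℤ) * B1) : ℤ) : ℝ) / p) =
    stdAddChar ((B2 : ZMod p) * ((n2 : ZMod p) - (m1 : ZMod p) * (Z1 : ZMod p))) := by
  rw [← add_div, ← Int.cast_add, eChar_intCast_div]
  push_cast
  simp only [hB1, ZMod.natCast_self]
  congr 1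
  ring

section Prime

variable {p : ℕ} [Fact p.Prime]

theorem ramanujanSum_prime (n : ℤ) :
    ramanujanSum p n = if (n : ZMod p) = 0 then (p : ℂ) - 1 else -1 := by
  have h (x : ZMod p) : (if IsUnit x then stdAddChar (x * (n : ZMod p)) else 0) =
      stdAddChar (x * (n : ZMod p)) - if x = 0 then 1 else 0 := by
    rcases eq_or_ne x 0 with rfl | hx <;> simp [*]
  rw [ramanujanSum_eq_sum_isUnit, Fintype.sum_congr _ _ h, sum_sub_distrib,
    AddChar.sum_mulShift _ (isPrimitive_stdAddChar p), Fintype.sum_ite_eq']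
  split_ifs <;> simp [ZMod.card]

theorem Nat.gcd_gcd_prime_eq_one_iff (b c : ℕ) :
    Nat.gcd (Nat.gcd b c) p = 1 ↔ ¬((b : ZMod p) = 0 ∧ (c : ZMod p) = 0) := by
  rw [← Nat.Coprime, Nat.coprime_comm, Nat.Prime.coprime_iff_not_dvd Fact.out, Nat.dvd_gcd_iff,
    ZMod.natCast_eq_zero_iff, ZMod.natCast_eq_zero_iff]

theorem kloosterman3_level_prime_cond_iff {B1 C1 Y1 Z1 B2 C2 Y2 Z2 : ℕ} (hB1 : B1 < p) :
    (((p : ℤ) * C2 + (B1 : ℤ) * B2 + (p : ℤ) * C1) % ((p : ℤ) * p) = 0 ∧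
       Nat.gcd (Nat.gcd B1 C1) p = 1 ∧ Nat.gcd (Nat.gcd B2 C2) p = 1 ∧
       (p : ℤ) ∣ (B1 : ℤ) ∧
       ((Y1 : ℤ) * B1 + (Z1 : ℤ) * C1) % (p : ℤ) = 1 % (p : ℤ) ∧
       ((Y2 : ℤ) * B2 + (Z2 : ℤ) * C2) % (p : ℤ) = 1 % (p : ℤ)) ↔
    ((B1 : ZMod p) = 0 ∧ (C1 : ZMod p) ≠ 0 ∧ (Z1 : ZMod p) = (C1 : ZMod p)⁻¹ ∧
      (C2 : ZMod p) = -C1 ∧ (Z2 : ZMod p) = (Y2 * B2 - 1) * Z1) := by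
  obtain rfl | hB1pos := Nat.eq_zero_or_pos B1
  · simp only [Nat.cast_zero, zero_mul, add_zero, mul_add_mul_emod_mul_self_eq_zero_iff,
      Nat.gcd_gcd_prime_eq_one_iff, Int.emod_eq_one_emod_iff_zmod, dvd_zero, true_and]
    push_cast
    rw [mul_zero, zero_add]
    exact kloosterman_constraints_iff
  · have : ¬ p ∣ B1 := Nat.not_dvd_of_pos_of_lt hB1pos hB1
    simp [ZMod.natCast_eq_zero_iff, this, Int.natCast_dvd_natCast]

theorem kloosterman3_level_prime_eq_sum_zmod (n1 n2 m1 m2 : ℤ) :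
    Kloosterman3 p n1 n2 m1 m2 p p = 1 / ((p : ℂ) * p) *
      ∑ B1 : ZMod p, ∑ C1 : ZMod p, ∑ _Y1 : ZMod p, ∑ Z1 : ZMod p,
      ∑ B2 : ZMod p, ∑ C2 : ZMod p, ∑ Y2 : ZMod p, ∑ Z2 : ZMod p,
        if B1 = 0 ∧ C1 ≠ 0 ∧ Z1 = C1⁻¹ ∧ C2 = -C1 ∧ Z2 = (Y2 * B2 - 1) * Z1 then
          stdAddChar (B2 * ((n2 : ZMod p) - (m1 : ZMod p) * Z1))
        else 0 := by
  simp only [Kloosterman3, ← sum_range_natCast_zmod]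
  refine congrArg (1 / ((p : ℂ) * p) * ·) ?_
  refine sum_congr rfl fun B1 hB1 => ?_
  iterate 7 refine sum_congr rfl fun _ _ => ?_
  exact ite_congr (propext (kloosterman3_level_prime_cond_iff (mem_range.mp hB1)))
    (fun h => kloosterman3_phase_eq_stdAddChar n1 n2 m1 m2 h.1 _ _ _ _ _) fun _ => rfl

theorem kloosterman3_level_prime_eq_sum_ne_zero (n1 n2 m1 m2 : ℤ) :
    Kloosterman3 p n1 n2 m1 m2 p p =
      ∑ c : ZMod p, if c ≠ 0 then (if (n2 : ZMod p) - m1 * c⁻¹ = 0 then (p : ℂ) else 0) else 0 := by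
  rw [kloosterman3_level_prime_eq_sum_zmod]
  simp only [ite_and, sum_ite_irrel, sum_const_zero, Fintype.sum_ite_eq', sum_const,
    card_univ, ZMod.card, nsmul_eq_mul, ← mul_sum,
    AddChar.sum_mulShift _ (isPrimitive_stdAddChar p)]
  rw [mul_sum]
  refine Fintype.sum_congr _ _ fun c => ?_
  have hp : (p : ℂ) ≠ 0 := by exact_mod_cast (Fact.out : p.Prime).ne_zero
  split_ifs <;> simp
  field_simp

theorem sum_ne_zero_ite_sub_mul_inv_eq_zero (m n : ZMod p) :
    ∑ c : ZMod p, (if c ≠ 0 then (if n - m * c⁻¹ = 0 then (p : ℂ) else 0) else 0) =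
      p - 1 + (if m = 0 then (p : ℂ) - 1 else -1) * (if n = 0 then (p : ℂ) - 1 else -1) := by
  rcases eq_or_ne m 0 with rfl | hm
  · rcases eq_or_ne n 0 with rfl | hn
    · simp [sum_ite, filter_ne', ZMod.card, Nat.cast_sub (Fact.out : p.Prime).one_le]
      ring
    · simp [hn]
  rcases eq_or_ne n 0 with rfl | hn
  · refine (sum_eq_zero fun c _ => by aesop).trans ?_
    simp [hm]
  have h (c : ZMod p) : (c ≠ 0 ∧ n - m * c⁻¹ = 0) ↔ c = m * n⁻¹ := by
    constructor
    · rintro ⟨hc, h⟩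
      field_simp at h
      rw [eq_mul_inv_iff_mul_eq₀ hn]
      linear_combination h
    · rintro rfl
      refine ⟨by simp [hm, hn], ?_⟩
      field_simp
      simp
  simp only [← ite_and, h, Fintype.sum_ite_eq', hm, hn, if_false]
  ring

theorem kloosterman3_level_prime_eq (n1 n2 m1 m2 : ℤ) :
    Kloosterman3 p n1 n2 m1 m2 p p = (p : ℂ) - 1 + ramanujanSum p m1 * ramanujanSum p n2 := by
  rw [kloosterman3_level_prime_eq_sum_ne_zero, sum_ne_zero_ite_sub_mul_inv_eq_zero,
    ramanujanSum_prime, ramanujanSum_prime]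

end Prime

/-- for a prime `p`,
`S^{(p)}(n1,n2,m1,m2;p,p) = p − 1 + r_p(m1) r_p(n2)`, and the explicit case distinction. -/
theorem kloosterman3_level_p_p_p (p : ℕ) (hp : p.Prime) (n1 n2 m1 m2 : ℤ) :
    Kloosterman3 p n1 n2 m1 m2 p p = ((p : ℂ) - 1) + ramanujanSum p m1 * ramanujanSum p n2 ∧
    (((p : ℤ) ∣ m1 ∧ (p : ℤ) ∣ n2) →
      Kloosterman3 p n1 n2 m1 m2 p p = (p : ℂ) * ((p : ℂ) - 1)) ∧
    (¬ (p : ℤ) ∣ m1 * n2 → Kloosterman3 p n1 n2 m1 m2 p p = (p : ℂ)) ∧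
    (((p : ℤ) ∣ m1 * n2 ∧ ¬ ((p : ℤ) ∣ m1 ∧ (p : ℤ) ∣ n2)) →
      Kloosterman3 p n1 n2 m1 m2 p p = 0) := by
  have := Fact.mk hp
  simp only [kloosterman3_level_prime_eq, ramanujanSum_prime,
    ← ZMod.intCast_zmod_eq_zero_iff_dvd, Int.cast_mul, mul_eq_zero]
  by_cases hm : (m1 : ZMod p) = 0 <;> by_cases hn : (n2 : ZMod p) = 0 <;> simp [hm, hn]
  ring
end

section
/- Let α, β, γ be nonzero complex numbers with αβγ = 1, pairwise distinct enough that the Schur-polynomial denominators are nonzero, and define A(j,i) for nonnegative integers j,i by the ratio of determinants A(p^j,p^i) = det[[α^{j+i+2},β^{j+i+2},γ^{j+i+2}],[α^{j+1},β^{j+1},γ^{j+1}],[1,1,1]] / det[[α^2,β^2,γ^2],[α,β,γ],[1,1,1]]. Then for |x| sufficiently small, Σ_{i,j,k ≥ 0} A(2j,2i) x^{i+2j+3k} = [(1−α^2 x)(1−β^2 x)(1−γ^2 x)(1−αβ x)(1−αγ x)(1−βγ x)]^{-1}. -/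
open Finset

/-- The GL(3) Fourier coefficient `A(p^k, p^ℓ)` as a ratio of generalized Vandermonde
determinants (Schur polynomial `s_{(k+ℓ,k,0)}(α,β,γ)` when `α,β,γ` are pairwise distinct). -/
noncomputable def schurA (α β γ : ℂ) (k l : ℕ) : ℂ :=
  Matrix.det !![α ^ (k + l + 2), β ^ (k + l + 2), γ ^ (k + l + 2);
                α ^ (k + 1), β ^ (k + 1), γ ^ (k + 1);
                1, 1, 1] /
  Matrix.det !![α ^ 2, β ^ 2, γ ^ 2; α, β, γ; 1, 1, 1]

private lemma one_sub_ne' {y : ℂ} (h : ‖y‖ < 1) : 1 - y ≠ 0 := by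
  intro h0
  rw [sub_eq_zero] at h0
  rw [← h0] at h
  simp at h

private lemma one_add_ne' {y : ℂ} (h : ‖y‖ < 1) : 1 + y ≠ 0 := by
  have h2 : 1 - -y ≠ 0 := one_sub_ne' (by simpa using h)
  simpa [sub_neg_eq_add] using h2

private lemma summable_norm_geo' {a : ℂ} (ha : ‖a‖ < 1) :
    Summable fun n : ℕ => ‖a ^ n‖ := by
  simpa [norm_pow] using summable_geometric_of_lt_one (norm_nonneg a) ha

private lemma summable_norm_geo2' {b d : ℂ} (hb : ‖b‖ < 1) (hd : ‖d‖ < 1) :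
    Summable fun p : ℕ × ℕ => ‖b ^ p.1 * d ^ p.2‖ :=
  (summable_norm_geo' hb).mul_norm (summable_norm_geo' hd)

private lemma summable_geo3' {a b d : ℂ} (ha : ‖a‖ < 1) (hb : ‖b‖ < 1) (hd : ‖d‖ < 1) :
    Summable fun q : ℕ × ℕ × ℕ => a ^ q.1 * (b ^ q.2.1 * d ^ q.2.2) := by
  apply Summable.of_norm
  have := (summable_norm_geo' ha).mul_norm (summable_norm_geo2' hb hd)
  simpa using this

private lemma tsum_geo3' {a b d : ℂ} (ha : ‖a‖ < 1) (hb : ‖b‖ < 1) (hd : ‖d‖ < 1) :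
    ∑' q : ℕ × ℕ × ℕ, a ^ q.1 * (b ^ q.2.1 * d ^ q.2.2)
      = (1 - a)⁻¹ * ((1 - b)⁻¹ * (1 - d)⁻¹) := by
  have h1 : (∑' n : ℕ, a ^ n) * (∑' p : ℕ × ℕ, b ^ p.1 * d ^ p.2)
      = ∑' q : ℕ × (ℕ × ℕ), a ^ q.1 * (b ^ q.2.1 * d ^ q.2.2) := by
    have := tsum_mul_tsum_of_summable_norm (R := ℂ)
      (summable_norm_geo' ha) (summable_norm_geo2' hb hd)
    simpa using this
  rw [show (∑' q : ℕ × ℕ × ℕ, a ^ q.1 * (b ^ q.2.1 * d ^ q.2.2))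
      = ∑' q : ℕ × (ℕ × ℕ), a ^ q.1 * (b ^ q.2.1 * d ^ q.2.2) from rfl, ← h1,
    ← tsum_mul_tsum_of_summable_norm (R := ℂ) (summable_norm_geo' hb) (summable_norm_geo' hd),
    tsum_geometric_of_norm_lt_one ha, tsum_geometric_of_norm_lt_one hb,
    tsum_geometric_of_norm_lt_one hd]

private lemma tsum_six_geo' (c1 c2 c3 c4 c5 c6 a1 a2 a3 a4 a5 a6 b1 b2 b3 b4 b5 b6 X : ℂ)
    (ha1 : ‖a1‖ < 1) (ha2 : ‖a2‖ < 1) (ha3 : ‖a3‖ < 1) (ha4 : ‖a4‖ < 1)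
    (ha5 : ‖a5‖ < 1) (ha6 : ‖a6‖ < 1)
    (hb1 : ‖b1‖ < 1) (hb2 : ‖b2‖ < 1) (hb3 : ‖b3‖ < 1) (hb4 : ‖b4‖ < 1)
    (hb5 : ‖b5‖ < 1) (hb6 : ‖b6‖ < 1) (hX : ‖X‖ < 1) :
    ∑' q : ℕ × ℕ × ℕ,
        (c1 * (a1 ^ q.1 * (b1 ^ q.2.1 * X ^ q.2.2)) + c2 * (a2 ^ q.1 * (b2 ^ q.2.1 * X ^ q.2.2))
         + c3 * (a3 ^ q.1 * (b3 ^ q.2.1 * X ^ q.2.2)) + c4 * (a4 ^ q.1 * (b4 ^ q.2.1 * X ^ q.2.2))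
         + c5 * (a5 ^ q.1 * (b5 ^ q.2.1 * X ^ q.2.2)) + c6 * (a6 ^ q.1 * (b6 ^ q.2.1 * X ^ q.2.2)))
      = c1 * ((1 - a1)⁻¹ * ((1 - b1)⁻¹ * (1 - X)⁻¹))
        + c2 * ((1 - a2)⁻¹ * ((1 - b2)⁻¹ * (1 - X)⁻¹))
        + c3 * ((1 - a3)⁻¹ * ((1 - b3)⁻¹ * (1 - X)⁻¹))
        + c4 * ((1 - a4)⁻¹ * ((1 - b4)⁻¹ * (1 - X)⁻¹))
        + c5 * ((1 - a5)⁻¹ * ((1 - b5)⁻¹ * (1 - X)⁻¹))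
        + c6 * ((1 - a6)⁻¹ * ((1 - b6)⁻¹ * (1 - X)⁻¹)) := by
  have s1 := (summable_geo3' ha1 hb1 hX).mul_left c1
  have s2 := (summable_geo3' ha2 hb2 hX).mul_left c2
  have s3 := (summable_geo3' ha3 hb3 hX).mul_left c3
  have s4 := (summable_geo3' ha4 hb4 hX).mul_left c4
  have s5 := (summable_geo3' ha5 hb5 hX).mul_left c5
  have s6 := (summable_geo3' ha6 hb6 hX).mul_left c6
  rw [Summable.tsum_add ((((s1.add s2).add s3).add s4).add s5) s6,
    Summable.tsum_add (((s1.add s2).add s3).add s4) s5,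
    Summable.tsum_add ((s1.add s2).add s3) s4,
    Summable.tsum_add (s1.add s2) s3,
    Summable.tsum_add s1 s2,
    tsum_mul_left, tsum_mul_left, tsum_mul_left, tsum_mul_left, tsum_mul_left, tsum_mul_left,
    tsum_geo3' ha1 hb1 hX, tsum_geo3' ha2 hb2 hX, tsum_geo3' ha3 hb3 hX,
    tsum_geo3' ha4 hb4 hX, tsum_geo3' ha5 hb5 hX, tsum_geo3' ha6 hb6 hX]

private lemma frac6' (V dA dB dC dAB dAC dBC eAB eAC eBC pAB pAC pBC X3 c1 c2 c3 c4 c5 c6 : ℂ)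
    (hV : V ≠ 0) (hdA : dA ≠ 0) (hdB : dB ≠ 0) (hdC : dC ≠ 0)
    (hdAB : dAB ≠ 0) (hdAC : dAC ≠ 0) (hdBC : dBC ≠ 0)
    (heAB : eAB = dAB * pAB) (heAC : eAC = dAC * pAC) (heBC : eBC = dBC * pBC)
    (hpAB : pAB ≠ 0) (hpAC : pAC ≠ 0) (hpBC : pBC ≠ 0) (hX3 : X3 ≠ 0)
    (key : c1 * dB * dC * eAC * eBC + c2 * dB * dC * eAB * eBC + c3 * dA * dC * eAC * eBC
        + c4 * dA * dC * eAB * eAC + c5 * dA * dB * eAB * eBC + c6 * dA * dB * eAB * eAC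
        = V * X3 * pAB * pAC * pBC) :
    V⁻¹ * (c1 * (dA⁻¹ * (eAB⁻¹ * X3⁻¹)) + c2 * (dA⁻¹ * (eAC⁻¹ * X3⁻¹))
        + c3 * (dB⁻¹ * (eAB⁻¹ * X3⁻¹)) + c4 * (dB⁻¹ * (eBC⁻¹ * X3⁻¹))
        + c5 * (dC⁻¹ * (eAC⁻¹ * X3⁻¹)) + c6 * (dC⁻¹ * (eBC⁻¹ * X3⁻¹)))
      = (dA * dB * dC * dAB * dAC * dBC)⁻¹ := by
  subst heAB heAC heBC
  have T : ∀ c d e f g : ℂ, c * (d⁻¹ * ((e * f)⁻¹ * g⁻¹)) = c / (d * (e * (f * g))) := by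
    intros c d e f g
    rw [div_eq_mul_inv]
    simp only [mul_inv]
    ring
  rw [T c1 dA dAB pAB X3, T c2 dA dAC pAC X3, T c3 dB dAB pAB X3, T c4 dB dBC pBC X3,
    T c5 dC dAC pAC X3, T c6 dC dBC pBC X3]
  have hD1 : dA * (dAB * (pAB * X3)) ≠ 0 := mul_ne_zero hdA (mul_ne_zero hdAB (mul_ne_zero hpAB hX3))
  have hD2 : dA * (dAC * (pAC * X3)) ≠ 0 := mul_ne_zero hdA (mul_ne_zero hdAC (mul_ne_zero hpAC hX3))
  have hD3 : dB * (dAB * (pAB * X3)) ≠ 0 := mul_ne_zero hdB (mul_ne_zero hdAB (mul_ne_zero hpAB hX3))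
  have hD4 : dB * (dBC * (pBC * X3)) ≠ 0 := mul_ne_zero hdB (mul_ne_zero hdBC (mul_ne_zero hpBC hX3))
  have hD5 : dC * (dAC * (pAC * X3)) ≠ 0 := mul_ne_zero hdC (mul_ne_zero hdAC (mul_ne_zero hpAC hX3))
  have hD6 : dC * (dBC * (pBC * X3)) ≠ 0 := mul_ne_zero hdC (mul_ne_zero hdBC (mul_ne_zero hpBC hX3))
  rw [div_add_div _ _ hD1 hD2, div_add_div _ _ (mul_ne_zero hD1 hD2) hD3,
    div_add_div _ _ (mul_ne_zero (mul_ne_zero hD1 hD2) hD3) hD4,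
    div_add_div _ _ (mul_ne_zero (mul_ne_zero (mul_ne_zero hD1 hD2) hD3) hD4) hD5,
    div_add_div _ _ (mul_ne_zero (mul_ne_zero (mul_ne_zero (mul_ne_zero hD1 hD2) hD3) hD4) hD5) hD6,
    inv_mul_eq_div, div_div, inv_eq_one_div,
    div_eq_div_iff
      (mul_ne_zero (mul_ne_zero (mul_ne_zero (mul_ne_zero (mul_ne_zero (mul_ne_zero hD1 hD2) hD3) hD4) hD5) hD6) hV)
      (mul_ne_zero (mul_ne_zero (mul_ne_zero (mul_ne_zero (mul_ne_zero hdA hdB) hdC) hdAB) hdAC) hdBC)]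
  linear_combination (dA^2 * dB^2 * dC^2 * dAB^2 * dAC^2 * dBC^2 * pAB * pAC * pBC * X3^5) * key


set_option maxHeartbeats 2000000 in
/-- for unramified Satake parameters `α,β,γ` (nonzero, pairwise distinct,
`αβγ = 1`) and `|x|` sufficiently small,
`Σ_{i,j,k ≥ 0} A(p^{2j}, p^{2i}) x^{i+2j+3k}
  = [(1−α²x)(1−β²x)(1−γ²x)(1−αβx)(1−αγx)(1−βγx)]⁻¹`. -/
theorem symSquare_local_factor (α β γ : ℂ) (hα : α ≠ 0) (hβ : β ≠ 0) (hγ : γ ≠ 0)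
    (h1 : α * β * γ = 1) (hab : α ≠ β) (hbc : β ≠ γ) (hac : α ≠ γ) :
    ∃ r > (0 : ℝ), ∀ x : ℂ, ‖x‖ < r →
      ∑' q : ℕ × ℕ × ℕ,
          schurA α β γ (2 * q.2.1) (2 * q.1) * x ^ (q.1 + 2 * q.2.1 + 3 * q.2.2) =
        ((1 - α ^ 2 * x) * (1 - β ^ 2 * x) * (1 - γ ^ 2 * x) *
          (1 - α * β * x) * (1 - α * γ * x) * (1 - β * γ * x))⁻¹ := by
  refine ⟨(2 * (max ‖α‖ (max ‖β‖ (max ‖γ‖ 1))) ^ 2)⁻¹, by positivity, ?_⟩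
  intro x hx
  set m : ℝ := max ‖α‖ (max ‖β‖ (max ‖γ‖ 1)) with hmdef
  have hm1 : (1 : ℝ) ≤ m := le_max_of_le_right (le_max_of_le_right (le_max_right _ _))
  have hm0 : (0 : ℝ) < m := lt_of_lt_of_le one_pos hm1
  have hm0' : m ≠ 0 := ne_of_gt hm0
  have hma : ‖α‖ ≤ m := le_max_left _ _
  have hmb : ‖β‖ ≤ m := le_max_of_le_right (le_max_left _ _)
  have hmg : ‖γ‖ ≤ m := le_max_of_le_right (le_max_of_le_right (le_max_left _ _))
  have hx2 : m ^ 2 * ‖x‖ < 1 / 2 := by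
    have h2 : m ^ 2 * ‖x‖ < m ^ 2 * (2 * m ^ 2)⁻¹ :=
      mul_lt_mul_of_pos_left hx (by positivity)
    have h3 : m ^ 2 * (2 * m ^ 2)⁻¹ = 1 / 2 := by field_simp
    linarith
  have hb : ∀ u v : ℂ, ‖u‖ ≤ m → ‖v‖ ≤ m → ‖u * v * x‖ < 1 / 2 := by
    intro u v hu hv
    have h3 : ‖u * v * x‖ = ‖u‖ * ‖v‖ * ‖x‖ := by rw [norm_mul, norm_mul]
    have h4 : ‖u‖ * ‖v‖ * ‖x‖ ≤ m * m * ‖x‖ :=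
      mul_le_mul_of_nonneg_right
        (mul_le_mul hu hv (norm_nonneg v) (le_trans (norm_nonneg u) hu)) (norm_nonneg x)
    rw [h3]
    nlinarith [hx2]
  have bA : ‖α ^ 2 * x‖ < 1 := by
    rw [show α ^ 2 * x = α * α * x by ring]; linarith [hb α α hma hma]
  have bB : ‖β ^ 2 * x‖ < 1 := by
    rw [show β ^ 2 * x = β * β * x by ring]; linarith [hb β β hmb hmb]
  have bC : ‖γ ^ 2 * x‖ < 1 := by
    rw [show γ ^ 2 * x = γ * γ * x by ring]; linarith [hb γ γ hmg hmg]
  have bAB : ‖α * β * x‖ < 1 := by linarith [hb α β hma hmb]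
  have bAC : ‖α * γ * x‖ < 1 := by linarith [hb α γ hma hmg]
  have bBC : ‖β * γ * x‖ < 1 := by linarith [hb β γ hmb hmg]
  have bEAB : ‖α ^ 2 * β ^ 2 * x ^ 2‖ < 1 := by
    rw [show α ^ 2 * β ^ 2 * x ^ 2 = α * β * x * (α * β * x) by ring, norm_mul]
    nlinarith [norm_nonneg (α * β * x), hb α β hma hmb]
  have bEAC : ‖α ^ 2 * γ ^ 2 * x ^ 2‖ < 1 := by
    rw [show α ^ 2 * γ ^ 2 * x ^ 2 = α * γ * x * (α * γ * x) by ring, norm_mul]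
    nlinarith [norm_nonneg (α * γ * x), hb α γ hma hmg]
  have bEBC : ‖β ^ 2 * γ ^ 2 * x ^ 2‖ < 1 := by
    rw [show β ^ 2 * γ ^ 2 * x ^ 2 = β * γ * x * (β * γ * x) by ring, norm_mul]
    nlinarith [norm_nonneg (β * γ * x), hb β γ hmb hmg]
  have hxlt : ‖x‖ < 1 := by nlinarith [hx2, norm_nonneg x, hm1]
  have bX3 : ‖x ^ 3‖ < 1 := by
    rw [norm_pow]
    exact pow_lt_one₀ (norm_nonneg x) hxlt (by norm_num)
  have hVne : (α - β) * (β - γ) * (α - γ) ≠ 0 :=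
    mul_ne_zero (mul_ne_zero (sub_ne_zero.mpr hab) (sub_ne_zero.mpr hbc)) (sub_ne_zero.mpr hac)
  have ndA : (1 : ℂ) - α ^ 2 * x ≠ 0 := one_sub_ne' bA
  have ndB : (1 : ℂ) - β ^ 2 * x ≠ 0 := one_sub_ne' bB
  have ndC : (1 : ℂ) - γ ^ 2 * x ≠ 0 := one_sub_ne' bC
  have ndAB : (1 : ℂ) - α * β * x ≠ 0 := one_sub_ne' bAB
  have ndAC : (1 : ℂ) - α * γ * x ≠ 0 := one_sub_ne' bAC
  have ndBC : (1 : ℂ) - β * γ * x ≠ 0 := one_sub_ne' bBC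
  have npAB : (1 : ℂ) + α * β * x ≠ 0 := one_add_ne' bAB
  have npAC : (1 : ℂ) + α * γ * x ≠ 0 := one_add_ne' bAC
  have npBC : (1 : ℂ) + β * γ * x ≠ 0 := one_add_ne' bBC
  have nX3 : (1 : ℂ) - x ^ 3 ≠ 0 := one_sub_ne' bX3
  have key : α ^ 2 * β * (1 - β ^ 2 * x) * (1 - γ ^ 2 * x) * (1 - α ^ 2 * γ ^ 2 * x ^ 2) *
          (1 - β ^ 2 * γ ^ 2 * x ^ 2)
        + -(α ^ 2 * γ) * (1 - β ^ 2 * x) * (1 - γ ^ 2 * x) * (1 - α ^ 2 * β ^ 2 * x ^ 2) *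
          (1 - β ^ 2 * γ ^ 2 * x ^ 2)
        + -(α * β ^ 2) * (1 - α ^ 2 * x) * (1 - γ ^ 2 * x) * (1 - α ^ 2 * γ ^ 2 * x ^ 2) *
          (1 - β ^ 2 * γ ^ 2 * x ^ 2)
        + β ^ 2 * γ * (1 - α ^ 2 * x) * (1 - γ ^ 2 * x) * (1 - α ^ 2 * β ^ 2 * x ^ 2) *
          (1 - α ^ 2 * γ ^ 2 * x ^ 2)
        + α * γ ^ 2 * (1 - α ^ 2 * x) * (1 - β ^ 2 * x) * (1 - α ^ 2 * β ^ 2 * x ^ 2) *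
          (1 - β ^ 2 * γ ^ 2 * x ^ 2)
        + -(β * γ ^ 2) * (1 - α ^ 2 * x) * (1 - β ^ 2 * x) * (1 - α ^ 2 * β ^ 2 * x ^ 2) *
          (1 - α ^ 2 * γ ^ 2 * x ^ 2)
      = (α - β) * (β - γ) * (α - γ) * (1 - x ^ 3) * (1 + α * β * x) * (1 + α * γ * x) *
          (1 + β * γ * x) := by
    linear_combination (β*γ ^ 2*x ^ 3 - β ^ 2*γ*x ^ 3 + β ^ 2*γ ^ 3*x ^ 4 - β ^ 3*γ ^ 2*x ^ 4 - α*γ ^ 2*x ^ 3 + α*β ^ 2*x ^ 3 + α*β ^ 2*γ ^ 3*x ^ 3 + α*β ^ 2*γ ^ 4*x ^ 5 - α*β ^ 3*γ ^ 2*x ^ 3 + α*β ^ 3*γ ^ 4*x ^ 4 - α*β ^ 4*γ ^ 2*x ^ 5 - α*β ^ 4*γ ^ 3*x ^ 4 + α ^ 2*γ*x ^ 3 - α ^ 2*γ ^ 3*x ^ 4 - α ^ 2*β*x ^ 3 - α ^ 2*β*γ ^ 3*x ^ 3 - α ^ 2*β*γ ^ 4*x ^ 5 + α ^ 2*β ^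 3*x ^ 4 + α ^ 2*β ^ 3*γ*x ^ 3 + α ^ 2*β ^ 3*γ ^ 4*x ^ 6 + α ^ 2*β ^ 3*γ ^ 5*x ^ 5 + α ^ 2*β ^ 4*γ*x ^ 5 - α ^ 2*β ^ 4*γ ^ 3*x ^ 6 - α ^ 2*β ^ 5*γ ^ 3*x ^ 5 + α ^ 3*γ ^ 2*x ^ 4 + α ^ 3*β*γ ^ 2*x ^ 3 - α ^ 3*β*γ ^ 4*x ^ 4 - α ^ 3*β ^ 2*x ^ 4 - α ^ 3*β ^ 2*γ*x ^ 3 - α ^ 3*β ^ 2*γ ^ 4*x ^ 6 - α ^ 3*β ^ 2*γ ^ 5*x ^ 5 + α ^ 3*β ^ 4*γ*x ^ 4 + α ^ 3*β ^ 4*γ ^ 2*x ^ 6 + α ^ 3*β ^ 4*γ ^ 5*x ^ 6 + α ^ 3*β ^ 5*γ ^ 2*x ^ 5 - α ^ 3*β ^ 5*γ ^ 4*x ^ 6 + α ^ 4*β*γ ^ 2*x ^ 5 + α ^ 4*β*γ ^ 3*x ^ 4 - α ^ 4*β ^ 2*γ*x ^ 5 + α ^ 4*β ^ 2*γ ^ 3*x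 ^ 6 - α ^ 4*β ^ 3*γ*x ^ 4 - α ^ 4*β ^ 3*γ ^ 2*x ^ 6 - α ^ 4*β ^ 3*γ ^ 5*x ^ 6 + α ^ 4*β ^ 5*γ ^ 3*x ^ 6 + α ^ 5*β ^ 2*γ ^ 3*x ^ 5 - α ^ 5*β ^ 3*γ ^ 2*x ^ 5 + α ^ 5*β ^ 3*γ ^ 4*x ^ 6 - α ^ 5*β ^ 4*γ ^ 3*x ^ 6) * h1
  have hVdet : (Matrix.det !![α ^ 2, β ^ 2, γ ^ 2; α, β, γ; 1, 1, 1])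
      = (α - β) * (β - γ) * (α - γ) := by
    simp [Matrix.det_fin_three]
    ring
  have hfun : ∀ i j k : ℕ, schurA α β γ (2 * j) (2 * i) * x ^ (i + 2 * j + 3 * k)
      = ((α - β) * (β - γ) * (α - γ))⁻¹ *
        (α ^ 2 * β * ((α ^ 2 * x) ^ i * ((α ^ 2 * β ^ 2 * x ^ 2) ^ j * (x ^ 3) ^ k))
         + -(α ^ 2 * γ) * ((α ^ 2 * x) ^ i * ((α ^ 2 * γ ^ 2 * x ^ 2) ^ j * (x ^ 3) ^ k))
         + -(α * β ^ 2) * ((β ^ 2 * x) ^ i * ((α ^ 2 * β ^ 2 * x ^ 2) ^ j * (x ^ 3) ^ k))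
         + β ^ 2 * γ * ((β ^ 2 * x) ^ i * ((β ^ 2 * γ ^ 2 * x ^ 2) ^ j * (x ^ 3) ^ k))
         + α * γ ^ 2 * ((γ ^ 2 * x) ^ i * ((α ^ 2 * γ ^ 2 * x ^ 2) ^ j * (x ^ 3) ^ k))
         + -(β * γ ^ 2) * ((γ ^ 2 * x) ^ i * ((β ^ 2 * γ ^ 2 * x ^ 2) ^ j * (x ^ 3) ^ k))) := by
    intro i j k
    simp only [schurA]
    rw [hVdet, div_eq_mul_inv]
    simp [Matrix.det_fin_three]
    ring
  calc ∑' q : ℕ × ℕ × ℕ,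
          schurA α β γ (2 * q.2.1) (2 * q.1) * x ^ (q.1 + 2 * q.2.1 + 3 * q.2.2)
      = ∑' q : ℕ × ℕ × ℕ, ((α - β) * (β - γ) * (α - γ))⁻¹ *
        (α ^ 2 * β * ((α ^ 2 * x) ^ q.1 * ((α ^ 2 * β ^ 2 * x ^ 2) ^ q.2.1 * (x ^ 3) ^ q.2.2))
         + -(α ^ 2 * γ) * ((α ^ 2 * x) ^ q.1 * ((α ^ 2 * γ ^ 2 * x ^ 2) ^ q.2.1 * (x ^ 3) ^ q.2.2))
         + -(α * β ^ 2) * ((β ^ 2 * x) ^ q.1 * ((α ^ 2 * β ^ 2 * x ^ 2) ^ q.2.1 * (x ^ 3) ^ q.2.2))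
         + β ^ 2 * γ * ((β ^ 2 * x) ^ q.1 * ((β ^ 2 * γ ^ 2 * x ^ 2) ^ q.2.1 * (x ^ 3) ^ q.2.2))
         + α * γ ^ 2 * ((γ ^ 2 * x) ^ q.1 * ((α ^ 2 * γ ^ 2 * x ^ 2) ^ q.2.1 * (x ^ 3) ^ q.2.2))
         + -(β * γ ^ 2) * ((γ ^ 2 * x) ^ q.1 * ((β ^ 2 * γ ^ 2 * x ^ 2) ^ q.2.1 * (x ^ 3) ^ q.2.2))) :=
        tsum_congr fun q => hfun q.1 q.2.1 q.2.2
    _ = ((1 - α ^ 2 * x) * (1 - β ^ 2 * x) * (1 - γ ^ 2 * x) *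
          (1 - α * β * x) * (1 - α * γ * x) * (1 - β * γ * x))⁻¹ := by
        rw [tsum_mul_left,
          tsum_six_geo' (α ^ 2 * β) (-(α ^ 2 * γ)) (-(α * β ^ 2)) (β ^ 2 * γ) (α * γ ^ 2)
            (-(β * γ ^ 2)) (α ^ 2 * x) (α ^ 2 * x) (β ^ 2 * x) (β ^ 2 * x) (γ ^ 2 * x) (γ ^ 2 * x)
            (α ^ 2 * β ^ 2 * x ^ 2) (α ^ 2 * γ ^ 2 * x ^ 2) (α ^ 2 * β ^ 2 * x ^ 2)
            (β ^ 2 * γ ^ 2 * x ^ 2) (α ^ 2 * γ ^ 2 * x ^ 2) (β ^ 2 * γ ^ 2 * x ^ 2) (x ^ 3)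
            bA bA bB bB bC bC bEAB bEAC bEAB bEBC bEAC bEBC bX3]
        exact frac6' ((α - β) * (β - γ) * (α - γ)) (1 - α ^ 2 * x) (1 - β ^ 2 * x) (1 - γ ^ 2 * x)
          (1 - α * β * x) (1 - α * γ * x) (1 - β * γ * x) (1 - α ^ 2 * β ^ 2 * x ^ 2)
          (1 - α ^ 2 * γ ^ 2 * x ^ 2) (1 - β ^ 2 * γ ^ 2 * x ^ 2) (1 + α * β * x) (1 + α * γ * x)
          (1 + β * γ * x) (1 - x ^ 3) (α ^ 2 * β) (-(α ^ 2 * γ)) (-(α * β ^ 2)) (β ^ 2 * γ)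
          (α * γ ^ 2) (-(β * γ ^ 2)) hVne ndA ndB ndC ndAB ndAC ndBC (by ring) (by ring) (by ring)
          npAB npAC npBC nX3 key
end

section
/- Let δ ≥ 1 be an integer, b ≥ 1 odd, and m1, m2, c, c', i, j, p integers with p prime, p ∤ 2bδ, gcd(m2, δ) arbitrary. Define the triple character sum 𝔠(δ) = Σ_{C1 mod 2^i b^2 δ, gcd(C1, 2^i b^2 δ)=1} Σ_{C2 mod δ, gcd(C2,δ)=1} Σ_{γ mod δ} e(m2 C̄1 C2/δ + 2^j p γ^2 C̄2/δ ∓ m1 m2 C1 p̄/(2^i b^2 δ) + cγ/δ). Then after the change of variables γ ↦ γC2 and evaluation of a Ramanujan sum, 𝔠(δ) = Σ_{d | δ} d μ(δ/d) Σ_{C1 mod 2^i b^2 δ, gcd(C1,2^i b^2 δ)=1} Σ_{γ mod δ, m2 + 2^j p γ^2 C1 + cγC1 ≡ 0 mod d} e(∓ m1 m2 C1 p̄/(2^i b^2 δ)). -/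
open Finset

lemma eChar_add (x y : ℝ) : eChar (x + y) = eChar x * eChar y := by
  unfold eChar; rw [← Complex.exp_add]; push_cast; ring_nf

lemma eChar_int (n : ℤ) : eChar n = 1 := by
  unfold eChar
  rw [show (2 * (Real.pi:ℂ) * Complex.I * ((n:ℝ):ℂ)) = n * (2 * Real.pi * Complex.I) by push_cast; ring]
  exact Complex.exp_int_mul_two_pi_mul_I n

noncomputable def eQ (m : ℕ) (a : ℤ) : ℂ := eChar ((a : ℝ) / m)

lemma em_add (m : ℕ) (a b : ℤ) : eQ m (a + b) = eQ m a * eQ m b := by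
  unfold eQ; rw [← eChar_add]; push_cast; rw [add_div]

lemma em_self_mul (m : ℕ) (hm : m ≠ 0) (k : ℤ) : eQ m ((m : ℤ) * k) = 1 := by
  unfold eQ
  have h : (((m:ℤ) * k : ℤ) : ℝ) / m = ((k : ℤ) : ℝ) := by
    have : (m:ℝ) ≠ 0 := Nat.cast_ne_zero.mpr hm
    push_cast; field_simp
  rw [h]; exact eChar_int k

lemma em_congr {m : ℕ} (hm : m ≠ 0) {a b : ℤ} (h : (a : ZMod m) = (b : ZMod m)) :
    eQ m a = eQ m b := by
  rw [ZMod.intCast_eq_intCast_iff] at h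
  obtain ⟨k, hk⟩ := (Int.modEq_iff_dvd.mp h)
  have : a = b + (m:ℤ) * (-k) := by linarith [hk]
  rw [this, em_add, em_self_mul m hm, mul_one]

lemma em_natmul (m : ℕ) (c : ℕ) (n : ℤ) : eQ m ((c:ℤ) * n) = eQ m n ^ c := by
  induction c with
  | zero => simp [eQ, eChar]
  | succ c ih =>
    have : ((c+1 : ℕ) : ℤ) * n = (c:ℤ) * n + n := by push_cast; ring
    rw [this, em_add, ih, pow_succ]

lemma em_eq_one_iff (m : ℕ) (hm : m ≠ 0) (n : ℤ) : eQ m n = 1 ↔ (m:ℤ) ∣ n := by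
  constructor
  · intro h
    unfold eQ eChar at h
    rw [Complex.exp_eq_one_iff] at h
    obtain ⟨k, hk⟩ := h
    have hne : (2 * (Real.pi:ℂ) * Complex.I) ≠ 0 := by
      simpa [mul_comm] using Complex.two_pi_I_ne_zero
    push_cast at hk
    have h2 : (n:ℂ)/(m:ℂ) = (k : ℂ) := mul_right_cancel₀ hne (by linear_combination hk)
    have h3 : (n:ℝ)/m = (k:ℝ) := by exact_mod_cast h2
    have hm' : (m:ℝ) ≠ 0 := Nat.cast_ne_zero.mpr hm
    have : (n:ℝ) = (k:ℝ) * m := by field_simp at h3; linarith [h3]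
    have : n = k * m := by exact_mod_cast this
    exact ⟨k, by linarith [this]⟩
  · rintro ⟨k, rfl⟩
    exact em_self_mul m hm k

lemma eQ_sum_orth (m : ℕ) (hm : 0 < m) (n : ℤ) :
    ∑ c ∈ range m, eQ m ((c:ℤ) * n) = if (m:ℤ) ∣ n then (m:ℂ) else 0 := by
  by_cases h : (m:ℤ) ∣ n
  · rw [if_pos h]
    obtain ⟨k, rfl⟩ := h
    have : ∀ c ∈ range m, eQ m ((c:ℤ) * ((m:ℤ)*k)) = 1 := by
      intro c _
      rw [show (c:ℤ) * ((m:ℤ)*k) = (m:ℤ) * (c*k) by ring]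
      exact em_self_mul m hm.ne' _
    rw [Finset.sum_congr rfl this]
    simp
  · rw [if_neg h]
    have hr : eQ m n ≠ 1 := fun h1 => h ((em_eq_one_iff m hm.ne' n).mp h1)
    have : ∀ c ∈ range m, eQ m ((c:ℤ) * n) = (eQ m n) ^ c := fun c _ => em_natmul m c n
    rw [Finset.sum_congr rfl this, geom_sum_eq hr m]
    have : eQ m n ^ m = 1 := by
      rw [← em_natmul, show ((m:ℕ):ℤ) * n = (m:ℤ) * n from rfl]
      exact em_self_mul m hm.ne' n
    rw [this]
    simp

lemma moebius_sum_ind (n : ℕ) (hn : n ≠ 0) :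
    ∑ g ∈ n.divisors, ((ArithmeticFunction.moebius g : ℤ) : ℂ) = if n = 1 then 1 else 0 := by
  have := congrArg (fun f => f n) ArithmeticFunction.moebius_mul_coe_zeta
  simp only [ArithmeticFunction.coe_mul_zeta_apply, ArithmeticFunction.one_apply] at this
  have : ((∑ g ∈ n.divisors, ArithmeticFunction.moebius g : ℤ) : ℂ)
      = ((if n = 1 then 1 else 0 : ℤ) : ℂ) := by exact_mod_cast congrArg (fun z : ℤ => (z : ℂ)) this
  rw [Int.cast_sum] at this
  simpa using this

lemma sum_range_dvd_reindex (m g : ℕ) (hg : g ∣ m) (hg0 : 0 < g) (F : ℕ → ℂ) :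
    ∑ c ∈ range m, (if g ∣ c then F c else 0) = ∑ e ∈ range (m / g), F (g * e) := by
  rw [← Finset.sum_filter]
  apply Finset.sum_nbij' (i := fun c => c / g) (j := fun e => g * e)
  · intro c hc
    simp only [Finset.mem_filter, Finset.mem_range] at hc
    exact Finset.mem_range.mpr (Nat.div_lt_div_of_lt_of_dvd hg hc.1)
  · intro e he
    simp only [Finset.mem_range] at he
    refine Finset.mem_filter.mpr ⟨Finset.mem_range.mpr ?_, Dvd.intro e rfl⟩
    calc g * e < g * (m / g) := by exact (Nat.mul_lt_mul_left hg0).mpr he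
    _ = m := Nat.mul_div_cancel' hg
  · intro c hc
    simp only [Finset.mem_filter] at hc
    exact Nat.mul_div_cancel' hc.2
  · intro e he
    exact Nat.mul_div_cancel_left e hg0
  · intro c hc
    simp only [Finset.mem_filter] at hc
    rw [Nat.mul_div_cancel' hc.2]

lemma eQ_div (m g : ℕ) (hg : g ∣ m) (hg0 : g ≠ 0) (hm : m ≠ 0) (a : ℤ) :
    eQ m ((g:ℤ) * a) = eQ (m / g) a := by
  obtain ⟨k, rfl⟩ := hg
  unfold eQ
  congr 1
  have hk : k ≠ 0 := by rintro rfl; simp at hm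
  rw [Nat.mul_div_cancel_left k (Nat.pos_of_ne_zero hg0)]
  have h1 : (g:ℝ) ≠ 0 := Nat.cast_ne_zero.mpr hg0
  have h2 : (k:ℝ) ≠ 0 := Nat.cast_ne_zero.mpr hk
  push_cast
  field_simp

lemma gcd_divisors_eq (c m : ℕ) (hm : m ≠ 0) :
    (Nat.gcd c m).divisors = m.divisors.filter (· ∣ c) := by
  ext g
  simp only [Nat.mem_divisors, Finset.mem_filter]
  constructor
  · rintro ⟨hg, -⟩
    exact ⟨⟨hg.trans (Nat.gcd_dvd_right c m), hm⟩, hg.trans (Nat.gcd_dvd_left c m)⟩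
  · rintro ⟨⟨hgm, -⟩, hgc⟩
    exact ⟨Nat.dvd_gcd hgc hgm, fun h => hm (Nat.eq_zero_of_gcd_eq_zero_right h)⟩

lemma ramanujan (m : ℕ) (hm : 0 < m) (n : ℤ) :
    ∑ c ∈ range m, (if Nat.gcd c m = 1 then eQ m ((c:ℤ) * n) else 0)
      = ∑ d ∈ m.divisors, (d : ℂ) * ((ArithmeticFunction.moebius (m / d) : ℤ) : ℂ) *
          (if (d:ℤ) ∣ n then 1 else 0) := by
  have step1 : ∀ c ∈ range m, (if Nat.gcd c m = 1 then eQ m ((c:ℤ) * n) else 0)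
      = ∑ g ∈ m.divisors, (if g ∣ c then ((ArithmeticFunction.moebius g : ℤ) : ℂ) * eQ m ((c:ℤ)*n) else 0) := by
    intro c _
    rw [← Finset.sum_filter, ← gcd_divisors_eq c m hm.ne', ← Finset.sum_mul,
      moebius_sum_ind _ (fun h => hm.ne' (Nat.eq_zero_of_gcd_eq_zero_right h))]
    by_cases h : Nat.gcd c m = 1 <;> simp [h]
  rw [Finset.sum_congr rfl step1, Finset.sum_comm]
  have step2 : ∀ g ∈ m.divisors,
      ∑ c ∈ range m, (if g ∣ c then ((ArithmeticFunction.moebius g : ℤ) : ℂ) * eQ m ((c:ℤ)*n) else 0)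
      = ((ArithmeticFunction.moebius g : ℤ) : ℂ) *
          (if ((m/g : ℕ):ℤ) ∣ n then ((m/g : ℕ) : ℂ) else 0) := by
    intro g hg
    obtain ⟨hgm, hm0⟩ := Nat.mem_divisors.mp hg
    have hg0 : 0 < g := Nat.pos_of_mem_divisors hg
    have e1 : ∀ c, (if g ∣ c then ((ArithmeticFunction.moebius g : ℤ) : ℂ) * eQ m ((c:ℤ)*n) else 0)
        = ((ArithmeticFunction.moebius g : ℤ) : ℂ) * (if g ∣ c then eQ m ((c:ℤ)*n) else 0) := by
      intro c; by_cases h : g ∣ c <;> simp [h]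
    simp only [e1]
    rw [← Finset.mul_sum, sum_range_dvd_reindex m g hgm hg0]
    congr 1
    have e2 : ∀ e ∈ range (m/g), eQ m (((g*e : ℕ):ℤ) * n) = eQ (m/g) ((e:ℤ) * n) := by
      intro e _
      rw [show ((g*e : ℕ):ℤ) * n = (g:ℤ) * ((e:ℤ)*n) by push_cast; ring]
      exact eQ_div m g hgm hg0.ne' hm.ne' _
    rw [Finset.sum_congr rfl e2, eQ_sum_orth (m/g) (Nat.div_pos (Nat.le_of_dvd hm hgm) hg0) n]
  rw [Finset.sum_congr rfl step2]
  rw [show (∑ d ∈ m.divisors, (d : ℂ) * ((ArithmeticFunction.moebius (m / d) : ℤ) : ℂ) *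
          (if (d:ℤ) ∣ n then 1 else 0))
      = ∑ g ∈ m.divisors, (fun d : ℕ => (d : ℂ) * ((ArithmeticFunction.moebius (m / d) : ℤ) : ℂ) *
          (if (d:ℤ) ∣ n then 1 else 0)) (m / g) from (Nat.sum_div_divisors m _).symm]
  apply Finset.sum_congr rfl
  intro g hg
  obtain ⟨hgm, hm0⟩ := Nat.mem_divisors.mp hg
  simp only
  rw [Nat.div_div_self hgm hm0]
  by_cases h : ((m/g : ℕ):ℤ) ∣ n <;> simp [h] <;> ring

lemma cond_iff_zmod (m : ℕ) (x : ℤ) (y : ℕ) :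
    (x * (y:ℤ)) % (m:ℤ) = 1 % (m:ℤ) ↔ (x : ZMod m) * (y : ZMod m) = 1 := by
  rw [← ZMod.intCast_eq_intCast_iff']
  push_cast
  rfl

lemma sum_inv_collapse (m : ℕ) (hm : 0 < m) (x : ℤ) (hx : IsUnit (x : ZMod m)) (F : ℕ → ℂ) :
    ∑ y ∈ range m, (if (x * (y:ℤ)) % (m:ℤ) = 1 % (m:ℤ) then F y else 0)
      = F ((x : ZMod m)⁻¹.val) := by
  haveI : NeZero m := ⟨hm.ne'⟩
  set u := (x : ZMod m)⁻¹ with hu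
  have hcast : ((u.val : ℕ) : ZMod m) = u := ZMod.natCast_rightInverse u
  rw [Finset.sum_eq_single_of_mem u.val (Finset.mem_range.mpr (ZMod.val_lt u))]
  · rw [if_pos]
    rw [cond_iff_zmod, hcast, hu]
    exact ZMod.mul_inv_of_unit _ hx
  · intro y hy hne
    rw [if_neg]
    intro hcond
    rw [cond_iff_zmod] at hcond
    have h2 : (y : ZMod m) = u := by
      have h3 : (x : ZMod m) * u = 1 := ZMod.mul_inv_of_unit _ hx
      have h4 := hx.unit.inv_mul_cancel_left
      calc (y : ZMod m) = (u * (x:ZMod m)) * y := by rw [mul_comm u, h3, one_mul]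
      _ = u * ((x:ZMod m) * y) := by ring
      _ = u := by rw [hcond, mul_one]
    apply hne
    rw [← ZMod.val_cast_of_lt (Finset.mem_range.mp hy), h2]

lemma sum_range_perm (m : ℕ) (hm : 0 < m) (u t : ℕ) (hut : (u * t) % m = 1 % m) (F : ℕ → ℂ) :
    ∑ γ ∈ range m, F γ = ∑ γ ∈ range m, F ((γ * u) % m) := by
  have hut' : u * t ≡ 1 [MOD m] := hut
  have key : ∀ a b : ℕ, (a * b) % m = 1 % m → ∀ γ < m, ((γ * a) % m * b) % m = γ := by
    intro a b hab γ hγ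
    have h1 : γ * (a * b) ≡ γ * 1 [MOD m] := Nat.ModEq.mul_left γ hab
    calc ((γ * a) % m * b) % m = (γ * a * b) % m := by rw [Nat.mod_mul_mod]
    _ = (γ * (a * b)) % m := by rw [mul_assoc]
    _ = (γ * 1) % m := h1
    _ = γ := by rw [mul_one, Nat.mod_eq_of_lt hγ]
  apply Finset.sum_nbij' (i := fun γ => (γ * t) % m) (j := fun γ => (γ * u) % m)
  · intro γ _; exact Finset.mem_range.mpr (Nat.mod_lt _ hm)
  · intro γ _; exact Finset.mem_range.mpr (Nat.mod_lt _ hm)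
  · intro γ hγ
    exact key t u (by rwa [mul_comm] at hut) γ (Finset.mem_range.mp hγ)
  · intro γ hγ
    exact key u t hut γ (Finset.mem_range.mp hγ)
  · intro γ hγ
    rw [key t u (by rwa [mul_comm] at hut) γ (Finset.mem_range.mp hγ)]

lemma core_lemma (δ : ℕ) (hδ : 0 < δ) (m2 c w : ℤ) (C1 : ℕ) (hC1 : Nat.Coprime C1 δ) :
    (∑ C2 ∈ range δ, ∑ γ ∈ range δ, ∑ C1i ∈ range δ, ∑ C2i ∈ range δ,
      if Nat.gcd C2 δ = 1 ∧ ((C1 : ℤ) * C1i) % (δ : ℤ) = 1 % (δ : ℤ) ∧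
          ((C2 : ℤ) * C2i) % (δ : ℤ) = 1 % (δ : ℤ) then
        eQ δ (m2 * C1i * C2 + w * (γ:ℤ)^2 * C2i + c * γ) else 0)
    = ∑ d ∈ δ.divisors, (d : ℂ) * ((ArithmeticFunction.moebius (δ / d) : ℤ) : ℂ) *
        ∑ γ ∈ range δ, (if (m2 + w * (γ:ℤ)^2 * C1 + c * γ * C1) % (d : ℤ) = 0
          then (1 : ℂ) else 0) := by
  haveI : NeZero δ := ⟨hδ.ne'⟩
  have hx : IsUnit (((C1 : ℤ)) : ZMod δ) := by
    rw [show (((C1 : ℤ)) : ZMod δ) = ((C1 : ℕ) : ZMod δ) by push_cast; rfl]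
    exact (ZMod.isUnit_iff_coprime C1 δ).mpr hC1
  set a : ℕ := (((C1 : ℤ) : ZMod δ))⁻¹.val with ha_def
  have ha : ((C1 : ℤ) : ZMod δ) * ((a : ℕ) : ZMod δ) = 1 := by
    rw [ha_def, ZMod.natCast_rightInverse]
    exact ZMod.mul_inv_of_unit _ hx
  -- Step 1: collapse C1i
  have step1 : ∀ C2 ∈ range δ, ∀ γ ∈ range δ,
      (∑ C1i ∈ range δ, ∑ C2i ∈ range δ,
        if Nat.gcd C2 δ = 1 ∧ ((C1 : ℤ) * C1i) % (δ : ℤ) = 1 % (δ : ℤ) ∧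
            ((C2 : ℤ) * C2i) % (δ : ℤ) = 1 % (δ : ℤ) then
          eQ δ (m2 * C1i * C2 + w * (γ:ℤ)^2 * C2i + c * γ) else 0)
      = ∑ C2i ∈ range δ,
          if Nat.gcd C2 δ = 1 ∧ ((C2 : ℤ) * C2i) % (δ : ℤ) = 1 % (δ : ℤ) then
            eQ δ (m2 * a * C2 + w * (γ:ℤ)^2 * C2i + c * γ) else 0 := by
    intro C2 _ γ _
    have e1 : ∀ C1i C2i : ℕ,
        (if Nat.gcd C2 δ = 1 ∧ ((C1 : ℤ) * C1i) % (δ : ℤ) = 1 % (δ : ℤ) ∧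
            ((C2 : ℤ) * C2i) % (δ : ℤ) = 1 % (δ : ℤ) then
          eQ δ (m2 * C1i * C2 + w * (γ:ℤ)^2 * C2i + c * γ) else 0)
        = (if ((C1 : ℤ) * C1i) % (δ : ℤ) = 1 % (δ : ℤ) then
            (if Nat.gcd C2 δ = 1 ∧ ((C2 : ℤ) * C2i) % (δ : ℤ) = 1 % (δ : ℤ) then
              eQ δ (m2 * C1i * C2 + w * (γ:ℤ)^2 * C2i + c * γ) else 0) else 0) := by
      intro C1i C2i
      split_ifs <;> tauto
    simp only [e1]
    have e2 : ∀ C1i ∈ range δ,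
        (∑ C2i ∈ range δ, (if ((C1 : ℤ) * C1i) % (δ : ℤ) = 1 % (δ : ℤ) then
            (if Nat.gcd C2 δ = 1 ∧ ((C2 : ℤ) * C2i) % (δ : ℤ) = 1 % (δ : ℤ) then
              eQ δ (m2 * C1i * C2 + w * (γ:ℤ)^2 * C2i + c * γ) else 0) else 0))
        = (if ((C1 : ℤ) * C1i) % (δ : ℤ) = 1 % (δ : ℤ) then
            (∑ C2i ∈ range δ, (if Nat.gcd C2 δ = 1 ∧ ((C2 : ℤ) * C2i) % (δ : ℤ) = 1 % (δ : ℤ) then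
              eQ δ (m2 * C1i * C2 + w * (γ:ℤ)^2 * C2i + c * γ) else 0)) else 0) := by
      intro C1i _
      split_ifs <;> simp
    rw [Finset.sum_congr rfl e2,
      sum_inv_collapse δ hδ (C1 : ℤ) hx
        (fun C1i => ∑ C2i ∈ range δ, (if Nat.gcd C2 δ = 1 ∧ ((C2 : ℤ) * C2i) % (δ : ℤ) = 1 % (δ : ℤ) then
          eQ δ (m2 * C1i * C2 + w * (γ:ℤ)^2 * C2i + c * γ) else 0))]
  rw [Finset.sum_congr rfl (fun C2 hC2 => Finset.sum_congr rfl (step1 C2 hC2))]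
  -- Step 2: for each C2, collapse C2i and substitute γ ↦ γ C2
  have step2 : ∀ C2 ∈ range δ,
      (∑ γ ∈ range δ, ∑ C2i ∈ range δ,
        if Nat.gcd C2 δ = 1 ∧ ((C2 : ℤ) * C2i) % (δ : ℤ) = 1 % (δ : ℤ) then
          eQ δ (m2 * a * C2 + w * (γ:ℤ)^2 * C2i + c * γ) else 0)
      = (if Nat.gcd C2 δ = 1 then
          ∑ γ ∈ range δ, eQ δ ((C2:ℤ) * (m2 * a + w * (γ:ℤ)^2 + c * γ)) else 0) := by
    intro C2 hC2
    by_cases hg : Nat.gcd C2 δ = 1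
    · rw [if_pos hg]
      have hu : IsUnit (((C2 : ℤ)) : ZMod δ) := by
        rw [show (((C2 : ℤ)) : ZMod δ) = ((C2 : ℕ) : ZMod δ) by push_cast; rfl]
        exact (ZMod.isUnit_iff_coprime C2 δ).mpr hg
      set t : ℕ := (((C2 : ℤ) : ZMod δ))⁻¹.val with ht_def
      have hct : ((C2 : ℤ) : ZMod δ) * ((t : ℕ) : ZMod δ) = 1 := by
        rw [ht_def, ZMod.natCast_rightInverse]
        exact ZMod.mul_inv_of_unit _ hu
      have hct' : ((C2 : ℕ) : ZMod δ) * ((t : ℕ) : ZMod δ) = 1 := by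
        rw [show ((C2 : ℕ) : ZMod δ) = (((C2 : ℤ)) : ZMod δ) by push_cast; rfl]
        exact hct
      have c1 : ∀ γ ∈ range δ,
          (∑ C2i ∈ range δ,
            if Nat.gcd C2 δ = 1 ∧ ((C2 : ℤ) * C2i) % (δ : ℤ) = 1 % (δ : ℤ) then
              eQ δ (m2 * a * C2 + w * (γ:ℤ)^2 * C2i + c * γ) else 0)
          = eQ δ (m2 * a * C2 + w * (γ:ℤ)^2 * t + c * γ) := by
        intro γ _
        have e3 : ∀ C2i : ℕ,
            (if Nat.gcd C2 δ = 1 ∧ ((C2 : ℤ) * C2i) % (δ : ℤ) = 1 % (δ : ℤ) then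
              eQ δ (m2 * a * C2 + w * (γ:ℤ)^2 * C2i + c * γ) else 0)
            = (if ((C2 : ℤ) * C2i) % (δ : ℤ) = 1 % (δ : ℤ) then
              eQ δ (m2 * a * C2 + w * (γ:ℤ)^2 * C2i + c * γ) else 0) := by
          intro C2i; simp [hg]
        simp only [e3]
        exact sum_inv_collapse δ hδ (C2 : ℤ) hu _
      rw [Finset.sum_congr rfl c1]
      have hctnat : (C2 * t) % δ = 1 % δ := by
        rw [← ZMod.natCast_eq_natCast_iff']
        push_cast
        exact hct'
      rw [sum_range_perm δ hδ C2 t hctnat (fun γ => eQ δ (m2 * a * C2 + w * (γ:ℤ)^2 * t + c * γ))]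
      apply Finset.sum_congr rfl
      intro γ _
      apply em_congr hδ.ne'
      push_cast [ZMod.natCast_mod]
      linear_combination (w * (γ : ZMod δ)^2 * ((C2 : ℕ) : ZMod δ)) * hct'
    · rw [if_neg hg]
      simp [hg]
  rw [Finset.sum_congr rfl step2]
  -- Step 3: Ramanujan sum
  have e4 : ∀ C2 ∈ range δ,
      (if Nat.gcd C2 δ = 1 then
          ∑ γ ∈ range δ, eQ δ ((C2:ℤ) * (m2 * a + w * (γ:ℤ)^2 + c * γ)) else 0)
      = ∑ γ ∈ range δ, (if Nat.gcd C2 δ = 1 then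
          eQ δ ((C2:ℤ) * (m2 * a + w * (γ:ℤ)^2 + c * γ)) else 0) := by
    intro C2 _; split_ifs <;> simp
  rw [Finset.sum_congr rfl e4, Finset.sum_comm]
  have e5 : ∀ γ ∈ range δ,
      (∑ C2 ∈ range δ, (if Nat.gcd C2 δ = 1 then
          eQ δ ((C2:ℤ) * (m2 * a + w * (γ:ℤ)^2 + c * γ)) else 0))
      = ∑ d ∈ δ.divisors, (d : ℂ) * ((ArithmeticFunction.moebius (δ / d) : ℤ) : ℂ) *
          (if ((d:ℕ):ℤ) ∣ (m2 * a + w * (γ:ℤ)^2 + c * γ) then 1 else 0) :=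
    fun γ _ => ramanujan δ hδ _
  rw [Finset.sum_congr rfl e5, Finset.sum_comm]
  apply Finset.sum_congr rfl
  intro d hd
  obtain ⟨hdδ, _⟩ := Nat.mem_divisors.mp hd
  rw [Finset.mul_sum]
  apply Finset.sum_congr rfl
  intro γ _
  congr 1
  have h5 : ((δ:ℕ):ℤ) ∣ (C1:ℤ) * (a:ℤ) - 1 := by
    have h6 : (((C1:ℤ) * (a:ℤ) : ℤ) : ZMod δ) = (((1:ℤ) : ℤ) : ZMod δ) := by
      push_cast
      push_cast at ha
      rw [ha]
    rw [ZMod.intCast_eq_intCast_iff] at h6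
    rw [show (C1:ℤ) * (a:ℤ) - 1 = -(1 - (C1:ℤ) * (a:ℤ)) by ring]
    exact dvd_neg.mpr (Int.ModEq.dvd h6)
  have hco : IsCoprime ((d:ℕ):ℤ) ((C1:ℕ):ℤ) :=
    (Nat.isCoprime_iff_coprime.mpr (hC1.coprime_dvd_right hdδ)).symm
  have hdd : ((d:ℕ):ℤ) ∣ ((δ:ℕ):ℤ) := Int.natCast_dvd_natCast.mpr hdδ
  have hdvd2 : ((d:ℕ):ℤ) ∣ (C1:ℤ) * (m2 * a + w * (γ:ℤ)^2 + c * γ)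
      - (m2 + w * (γ:ℤ)^2 * C1 + c * γ * C1) := by
    rw [show (C1:ℤ) * (m2 * (a:ℤ) + w * (γ:ℤ)^2 + c * γ)
        - (m2 + w * (γ:ℤ)^2 * C1 + c * γ * C1) = m2 * ((C1:ℤ) * (a:ℤ) - 1) by ring]
    exact ((hdd.trans h5)).mul_left m2
  have hkey : ((d:ℕ):ℤ) ∣ (m2 * a + w * (γ:ℤ)^2 + c * γ)
      ↔ (m2 + w * (γ:ℤ)^2 * C1 + c * γ * C1) % (d : ℤ) = 0 := by
    constructor
    · intro h
      have h1 : ((d:ℕ):ℤ) ∣ (C1:ℤ) * (m2 * a + w * (γ:ℤ)^2 + c * γ) := h.mul_left _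
      have h2 : ((d:ℕ):ℤ) ∣ (m2 + w * (γ:ℤ)^2 * C1 + c * γ * C1) := by
        have h3 := dvd_sub h1 hdvd2
        rw [show (C1:ℤ) * (m2 * a + w * (γ:ℤ)^2 + c * γ)
          - ((C1:ℤ) * (m2 * a + w * (γ:ℤ)^2 + c * γ)
            - (m2 + w * (γ:ℤ)^2 * C1 + c * γ * C1))
          = (m2 + w * (γ:ℤ)^2 * C1 + c * γ * C1) by ring] at h3
        exact h3
      exact Int.emod_eq_zero_of_dvd h2
    · intro h
      have h2 : ((d:ℕ):ℤ) ∣ (m2 + w * (γ:ℤ)^2 * C1 + c * γ * C1) :=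
        Int.dvd_of_emod_eq_zero h
      have h1 : ((d:ℕ):ℤ) ∣ (C1:ℤ) * (m2 * a + w * (γ:ℤ)^2 + c * γ) := by
        rw [show (C1:ℤ) * (m2 * a + w * (γ:ℤ)^2 + c * γ)
          = ((C1:ℤ) * (m2 * a + w * (γ:ℤ)^2 + c * γ)
            - (m2 + w * (γ:ℤ)^2 * C1 + c * γ * C1))
            + (m2 + w * (γ:ℤ)^2 * C1 + c * γ * C1) by ring]
        exact dvd_add hdvd2 h2
      exact hco.dvd_of_dvd_mul_left h1
  exact if_congr hkey rfl rfl

/-- reduction of the triple character sum `𝔠(δ)` to a one-dimensional sum.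
Bars denote multiplicative inverses modulo `δ` (for `C̄1, C̄2`) and modulo
`M = 2^i b² δ` (for `p̄`); we sum over the (unique) inverses in the corresponding ranges.
`𝔠(δ) = Σ_{d ∣ δ} d μ(δ/d) Σ_{C1 mod M, (C1,M)=1}
   Σ_{γ mod δ, m2 + 2^j p γ² C1 + cγC1 ≡ 0 mod d} e(∓ m1 m2 C1 p̄ / M)`. -/
theorem triple_character_sum_reduction (p : ℕ) (hp : p.Prime)
    (δ b : ℕ) (hδ : 1 ≤ δ) (hb : 1 ≤ b) (hbodd : Odd b)
    (m1 m2 c : ℤ) (i j : ℕ) (hpd : ¬ (p : ℤ) ∣ (2 * b * δ : ℤ))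
    (ε : ℤ) (hε : ε = 1 ∨ ε = -1) :
    (∑ C1 ∈ range (2 ^ i * b ^ 2 * δ), ∑ C2 ∈ range δ, ∑ γ ∈ range δ,
      ∑ C1i ∈ range δ, ∑ C2i ∈ range δ, ∑ pi ∈ range (2 ^ i * b ^ 2 * δ),
        if Nat.gcd C1 (2 ^ i * b ^ 2 * δ) = 1 ∧ Nat.gcd C2 δ = 1 ∧
           ((C1 : ℤ) * C1i) % (δ : ℤ) = 1 % (δ : ℤ) ∧
           ((C2 : ℤ) * C2i) % (δ : ℤ) = 1 % (δ : ℤ) ∧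
           ((p : ℤ) * pi) % ((2 ^ i * b ^ 2 * δ : ℕ) : ℤ) = 1 % ((2 ^ i * b ^ 2 * δ : ℕ) : ℤ) then
          eChar (((m2 * C1i * C2 : ℤ) : ℝ) / δ +
                 ((2 ^ j * (p : ℤ) * (γ : ℤ) ^ 2 * C2i : ℤ) : ℝ) / δ +
                 ((ε * m1 * m2 * C1 * pi : ℤ) : ℝ) / (2 ^ i * b ^ 2 * δ : ℕ) +
                 ((c * γ : ℤ) : ℝ) / δ)
        else 0) =
    ∑ d ∈ δ.divisors, (d : ℂ) * ((ArithmeticFunction.moebius (δ / d) : ℤ) : ℂ) *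
      ∑ C1 ∈ range (2 ^ i * b ^ 2 * δ), ∑ γ ∈ range δ, ∑ pi ∈ range (2 ^ i * b ^ 2 * δ),
        if Nat.gcd C1 (2 ^ i * b ^ 2 * δ) = 1 ∧
           ((p : ℤ) * pi) % ((2 ^ i * b ^ 2 * δ : ℕ) : ℤ) = 1 % ((2 ^ i * b ^ 2 * δ : ℕ) : ℤ) ∧
           (m2 + 2 ^ j * (p : ℤ) * (γ : ℤ) ^ 2 * C1 + c * γ * C1) % (d : ℤ) = 0 then
          eChar (((ε * m1 * m2 * C1 * pi : ℤ) : ℝ) / (2 ^ i * b ^ 2 * δ : ℕ))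
        else 0 := by
  have hδ0 : 0 < δ := hδ
  set M := 2 ^ i * b ^ 2 * δ with hM
  set Q : ℕ → ℂ := fun C1 => ∑ pi ∈ range M,
    (if Nat.gcd C1 M = 1 ∧ ((p : ℤ) * pi) % ((M : ℕ) : ℤ) = 1 % ((M : ℕ) : ℤ) then
      eChar (((ε * m1 * m2 * C1 * pi : ℤ) : ℝ) / (M : ℕ)) else 0) with hQ
  -- per-term factorization on the left
  have e0 : ∀ (C1 C2 γ C1i C2i pi : ℕ),
      (if Nat.gcd C1 M = 1 ∧ Nat.gcd C2 δ = 1 ∧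
           ((C1 : ℤ) * C1i) % (δ : ℤ) = 1 % (δ : ℤ) ∧
           ((C2 : ℤ) * C2i) % (δ : ℤ) = 1 % (δ : ℤ) ∧
           ((p : ℤ) * pi) % ((M : ℕ) : ℤ) = 1 % ((M : ℕ) : ℤ) then
          eChar (((m2 * C1i * C2 : ℤ) : ℝ) / δ +
                 ((2 ^ j * (p : ℤ) * (γ : ℤ) ^ 2 * C2i : ℤ) : ℝ) / δ +
                 ((ε * m1 * m2 * C1 * pi : ℤ) : ℝ) / (M : ℕ) +
                 ((c * γ : ℤ) : ℝ) / δ)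
        else 0)
      = (if Nat.gcd C2 δ = 1 ∧ ((C1 : ℤ) * C1i) % (δ : ℤ) = 1 % (δ : ℤ) ∧
            ((C2 : ℤ) * C2i) % (δ : ℤ) = 1 % (δ : ℤ) then
          eQ δ (m2 * C1i * C2 + 2 ^ j * (p : ℤ) * (γ:ℤ)^2 * C2i + c * γ) else 0)
        * (if Nat.gcd C1 M = 1 ∧ ((p : ℤ) * pi) % ((M : ℕ) : ℤ) = 1 % ((M : ℕ) : ℤ) then
            eChar (((ε * m1 * m2 * C1 * pi : ℤ) : ℝ) / (M : ℕ)) else 0) := by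
    intro C1 C2 γ C1i C2i pi
    by_cases hA : Nat.gcd C2 δ = 1 ∧ ((C1 : ℤ) * C1i) % (δ : ℤ) = 1 % (δ : ℤ) ∧
        ((C2 : ℤ) * C2i) % (δ : ℤ) = 1 % (δ : ℤ)
    · by_cases hB : Nat.gcd C1 M = 1 ∧
          ((p : ℤ) * pi) % ((M : ℕ) : ℤ) = 1 % ((M : ℕ) : ℤ)
      · rw [if_pos ⟨hB.1, hA.1, hA.2.1, hA.2.2, hB.2⟩, if_pos hA, if_pos hB]
        rw [show ((m2 * C1i * C2 : ℤ) : ℝ) / δ +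
                 ((2 ^ j * (p : ℤ) * (γ : ℤ) ^ 2 * C2i : ℤ) : ℝ) / δ +
                 ((ε * m1 * m2 * C1 * pi : ℤ) : ℝ) / (M : ℕ) +
                 ((c * γ : ℤ) : ℝ) / δ
            = (((m2 * C1i * C2 + 2 ^ j * (p : ℤ) * (γ:ℤ)^2 * C2i + c * γ : ℤ)) : ℝ) / (δ:ℕ) +
              ((ε * m1 * m2 * C1 * pi : ℤ) : ℝ) / (M : ℕ) by push_cast; ring, eChar_add]
        rfl
      · rw [if_neg (by tauto), if_neg hB, mul_zero]
    · rw [if_neg (by tauto), if_neg hA, zero_mul]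
  rw [Finset.sum_congr rfl (fun C1 _ => Finset.sum_congr rfl (fun C2 _ =>
    Finset.sum_congr rfl (fun γ _ => Finset.sum_congr rfl (fun C1i _ =>
    Finset.sum_congr rfl (fun C2i _ => Finset.sum_congr rfl (fun pi _ =>
      e0 C1 C2 γ C1i C2i pi))))))]
  simp only [← Finset.mul_sum, ← Finset.sum_mul]
  have e1 : ∀ (d C1 γ pi : ℕ),
      (if Nat.gcd C1 M = 1 ∧ ((p : ℤ) * pi) % ((M : ℕ) : ℤ) = 1 % ((M : ℕ) : ℤ) ∧
           (m2 + 2 ^ j * (p : ℤ) * (γ : ℤ) ^ 2 * C1 + c * γ * C1) % (d : ℤ) = 0 then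
          eChar (((ε * m1 * m2 * C1 * pi : ℤ) : ℝ) / (M : ℕ)) else 0)
      = (if (m2 + 2 ^ j * (p : ℤ) * (γ : ℤ) ^ 2 * C1 + c * γ * C1) % (d : ℤ) = 0 then
            (1 : ℂ) else 0)
        * (if Nat.gcd C1 M = 1 ∧ ((p : ℤ) * pi) % ((M : ℕ) : ℤ) = 1 % ((M : ℕ) : ℤ) then
            eChar (((ε * m1 * m2 * C1 * pi : ℤ) : ℝ) / (M : ℕ)) else 0) := by
    intro d C1 γ pi
    by_cases hc : (m2 + 2 ^ j * (p : ℤ) * (γ : ℤ) ^ 2 * C1 + c * γ * C1) % (d : ℤ) = 0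
    · by_cases hB : Nat.gcd C1 M = 1 ∧ ((p : ℤ) * pi) % ((M : ℕ) : ℤ) = 1 % ((M : ℕ) : ℤ)
      · rw [if_pos ⟨hB.1, hB.2, hc⟩, if_pos hc, if_pos hB, one_mul]
      · rw [if_neg (by tauto), if_neg hB, mul_zero]
    · rw [if_neg (by tauto), if_neg hc, zero_mul]
  have R1 : ∀ d : ℕ,
      (∑ C1 ∈ range M, ∑ γ ∈ range δ, ∑ pi ∈ range M,
        if Nat.gcd C1 M = 1 ∧ ((p : ℤ) * pi) % ((M : ℕ) : ℤ) = 1 % ((M : ℕ) : ℤ) ∧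
           (m2 + 2 ^ j * (p : ℤ) * (γ : ℤ) ^ 2 * C1 + c * γ * C1) % (d : ℤ) = 0 then
          eChar (((ε * m1 * m2 * C1 * pi : ℤ) : ℝ) / (M : ℕ)) else 0)
      = ∑ C1 ∈ range M,
          (∑ γ ∈ range δ, (if (m2 + 2 ^ j * (p : ℤ) * (γ : ℤ) ^ 2 * C1 + c * γ * C1) % (d : ℤ) = 0
            then (1:ℂ) else 0))
          * (∑ pi ∈ range M,
            (if Nat.gcd C1 M = 1 ∧ ((p : ℤ) * pi) % ((M : ℕ) : ℤ) = 1 % ((M : ℕ) : ℤ) then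
              eChar (((ε * m1 * m2 * C1 * pi : ℤ) : ℝ) / (M : ℕ)) else 0)) := by
    intro d
    apply Finset.sum_congr rfl
    intro C1 _
    rw [Finset.sum_congr rfl (fun γ _ => Finset.sum_congr rfl (fun pi _ => e1 d C1 γ pi))]
    simp only [← Finset.mul_sum, ← Finset.sum_mul]
  rw [Finset.sum_congr rfl (fun d (_ : d ∈ δ.divisors) => by rw [R1 d])]
  rw [Finset.sum_congr rfl (fun d (_ : d ∈ δ.divisors) => Finset.mul_sum _ _ _)]
  rw [Finset.sum_comm]
  apply Finset.sum_congr rfl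
  intro C1 _
  rw [show (∑ d ∈ δ.divisors, (d : ℂ) * ((ArithmeticFunction.moebius (δ / d) : ℤ) : ℂ) *
        ((∑ γ ∈ range δ, (if (m2 + 2 ^ j * (p : ℤ) * (γ : ℤ) ^ 2 * C1 + c * γ * C1) % (d : ℤ) = 0
            then (1:ℂ) else 0))
          * (∑ pi ∈ range M,
            (if Nat.gcd C1 M = 1 ∧ ((p : ℤ) * pi) % ((M : ℕ) : ℤ) = 1 % ((M : ℕ) : ℤ) then
              eChar (((ε * m1 * m2 * C1 * pi : ℤ) : ℝ) / (M : ℕ)) else 0))))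
      = (∑ d ∈ δ.divisors, (d : ℂ) * ((ArithmeticFunction.moebius (δ / d) : ℤ) : ℂ) *
          ∑ γ ∈ range δ, (if (m2 + 2 ^ j * (p : ℤ) * (γ : ℤ) ^ 2 * C1 + c * γ * C1) % (d : ℤ) = 0
            then (1:ℂ) else 0))
          * (∑ pi ∈ range M,
            (if Nat.gcd C1 M = 1 ∧ ((p : ℤ) * pi) % ((M : ℕ) : ℤ) = 1 % ((M : ℕ) : ℤ) then
              eChar (((ε * m1 * m2 * C1 * pi : ℤ) : ℝ) / (M : ℕ)) else 0)) from by
    rw [Finset.sum_mul]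
    exact Finset.sum_congr rfl (fun d _ => (mul_assoc _ _ _).symm)]
  by_cases hg : Nat.gcd C1 M = 1
  · congr 1
    have hC1δ : Nat.Coprime C1 δ :=
      Nat.Coprime.coprime_dvd_right (dvd_mul_left δ (2 ^ i * b ^ 2)) hg
    exact core_lemma δ hδ0 m2 c (2 ^ j * (p : ℤ)) C1 hC1δ
  · have hQ0 : (∑ pi ∈ range M,
        (if Nat.gcd C1 M = 1 ∧ ((p : ℤ) * pi) % ((M : ℕ) : ℤ) = 1 % ((M : ℕ) : ℤ) then
          eChar (((ε * m1 * m2 * C1 * pi : ℤ) : ℝ) / (M : ℕ)) else 0)) = 0 :=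
      Finset.sum_eq_zero (fun pi _ => if_neg (fun h => hg h.1))
    rw [hQ0, mul_zero, mul_zero]
end

section
/- For all n ≥ 1, Σ_{m ≤ x} τ_k(m)^2 / m ≍ (log x)^{k^2} as x → ∞; more precisely there exist constants c1, c2 > 0 depending only on k such that c1 (log x)^{k^2} ≤ Σ_{m ≤ x, m odd} τ_k(m)^2/m ≤ Σ_{m ≤ x} τ_k(m)^2/m ≤ c2 (log x)^{k^2} for all x ≥ 2. -/
open Finset

/-- The `k`-fold divisor function `τ_k(m)`: the number of ordered factorizations of `m`
into `k` positive-integer factors. -/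
def tauk (k m : ℕ) : ℕ :=
  ((Fintype.piFinset fun _ : Fin k => Finset.range (m + 1)).filter
    fun f => ∏ i, f i = m).card

/-!
Write `τ_k = ζ^k` as a Dirichlet power; comparisons between multiplicative functions then reduce
to prime powers, where `τ_k(p^e) = multichoose k e`.

Upper bound: `τ_k² ≤ τ_{k²}` pointwise, and `Σ_{m ≤ x} τ_K(m)/m ≤ (Σ_{n ≤ x} 1/n)^K`.

Lower bound, with `K = k²`: `τ_K ≤ (μ² τ_K) * (1_□ τ_K)`, and `Σ_{b ≤ x} 1_□(b) τ_K(b)/b` is at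
most `Σ_s τ_{K²}(s)/s² ≤ 2^{K²}`. Restricting to odd integers,
`Σ_{m ≤ x odd} τ_K(m)/m ≥ (Σ_{n ≤ x^{1/K} odd} 1/n)^K ≥ (log x / 2K)^K`, so the odd part of
`Σ μ²(a) τ_K(a)/a` is at least `2^{-K²} (log x / 2K)^K`. Finally `μ² τ_{k²} ≤ τ_k²`, since
`τ_{k²}(p) = k² = τ_k(p)²`.
-/

open ArithmeticFunction
open scoped ArithmeticFunction.zeta

local notation:max "τ" k:max => ((ζ : ArithmeticFunction ℕ) ^ k)

namespace Nat

lemma succ_mul_multichoose_succ (k e : ℕ) :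
    (e + 1) * k.multichoose (e + 1) = (k + e) * k.multichoose e := by
  rcases k with _ | j
  · rcases e with _ | e <;> simp
  · rw [multichoose_eq, multichoose_eq, show j + 1 + (e + 1) - 1 = j + e + 1 by omega,
      show j + 1 + e - 1 = j + e by omega, mul_comm, ← add_one_mul_choose_eq]
    ring

lemma cast_multichoose_eq_prod (k e : ℕ) :
    (k.multichoose e : ℝ) = ∏ i ∈ range e, ((k : ℝ) + i) / (i + 1) := by
  induction e with
  | zero => simp
  | succ e ih =>
    have h := congrArg (Nat.cast (R := ℝ)) (succ_mul_multichoose_succ k e)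
    push_cast at h
    rw [prod_range_succ, ← ih, mul_div_assoc', eq_div_iff (by positivity)]
    linarith

lemma multichoose_sq_le (k e : ℕ) : k.multichoose e ^ 2 ≤ (k ^ 2).multichoose e := by
  suffices (k.multichoose e : ℝ) ^ 2 ≤ (k ^ 2).multichoose e by exact_mod_cast this
  rw [cast_multichoose_eq_prod, cast_multichoose_eq_prod, ← prod_pow]
  refine prod_le_prod (fun i _ => by positivity) fun i _ => ?_
  rw [div_pow, div_le_div_iff₀ (by positivity) (by positivity)]
  push_cast
  -- the factorwise inequality amounts to `i (k - 1)² ≥ 0`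
  nlinarith [mul_nonneg (mul_nonneg (i.cast_nonneg : (0 : ℝ) ≤ i) (sq_nonneg ((k : ℝ) - 1)))
    (by positivity : (0 : ℝ) ≤ i + 1)]

lemma multichoose_two_mul_le {k : ℕ} (hk : 1 ≤ k) (e : ℕ) :
    k.multichoose (2 * e) ≤ k.multichoose e ^ 2 := by
  suffices (k.multichoose (2 * e) : ℝ) ≤ k.multichoose e ^ 2 by exact_mod_cast this
  rw [cast_multichoose_eq_prod, cast_multichoose_eq_prod, two_mul, prod_range_add, sq]
  refine mul_le_mul_of_nonneg_left (prod_le_prod (fun i _ => by positivity) fun i _ => ?_)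
    (by positivity)
  rw [div_le_div_iff₀ (by positivity) (by positivity)]
  have hk' : (1 : ℝ) ≤ k := by exact_mod_cast hk
  push_cast
  -- `(k + e + i) / (e + i + 1) ≤ (k + i) / (i + 1)` amounts to `e (k - 1) ≥ 0`
  nlinarith [mul_nonneg (e.cast_nonneg : (0 : ℝ) ≤ e) (sub_nonneg.2 hk')]

lemma multichoose_succ_le (k e : ℕ) : k.multichoose (e + 1) ≤ k * k.multichoose e := by
  rcases Nat.eq_zero_or_pos k with rfl | hk
  · simp
  refine Nat.le_of_mul_le_mul_left ?_ e.succ_pos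
  rw [succ_mul_multichoose_succ, ← mul_assoc]
  exact Nat.mul_le_mul_right _ (by nlinarith)

theorem Coprime.isSquare_mul_iff {m n : ℕ} (h : m.Coprime n) :
    IsSquare (m * n) ↔ IsSquare m ∧ IsSquare n := by
  refine ⟨fun ⟨c, hc⟩ => ?_, fun ⟨hm, hn⟩ => hm.mul hn⟩
  have hsq : m * n = c ^ 2 := by rw [hc, sq]
  obtain ⟨a, ha⟩ := exists_eq_pow_of_mul_eq_pow (Nat.isUnit_iff.2 h) hsq
  obtain ⟨b, hb⟩ := exists_eq_pow_of_mul_eq_pow (Nat.isUnit_iff.2 h.symm) ((mul_comm n m).trans hsq)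
  exact ⟨⟨a, by rw [ha, sq]⟩, ⟨b, by rw [hb, sq]⟩⟩

theorem mem_Icc_of_mul_mem_Icc {a b N : ℕ} (h : a * b ∈ Icc 1 N) :
    a ∈ Icc 1 N ∧ b ∈ Icc 1 N := by
  simp only [mem_Icc] at h ⊢
  have hab : 0 < a * b := h.1
  obtain ⟨ha, hb⟩ := CanonicallyOrderedAdd.mul_pos.1 hab
  exact ⟨⟨ha, (Nat.le_mul_of_pos_right a hb).trans h.2⟩,
    hb, (Nat.le_mul_of_pos_left b ha).trans h.2⟩

theorem card_finMulAntidiag_succ (k m : ℕ) :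
    #(finMulAntidiag (k + 1) m) = ∑ x ∈ m.divisorsAntidiagonal, #(finMulAntidiag k x.1) := by
  refine card_eq_sum_card_fiberwise (f := fun t => (∏ i, Fin.init t i, t (Fin.last k)))
    (fun t ht => ?_) |>.trans (sum_congr rfl fun x hx => ?_)
  · rw [mem_coe, mem_finMulAntidiag, Fin.prod_univ_castSucc] at ht
    exact mem_divisorsAntidiagonal.2 ht
  obtain ⟨hx, hm⟩ := mem_divisorsAntidiagonal.1 hx
  refine card_nbij' Fin.init (fun s => Fin.snoc s x.2) (fun t ht => ?_) (fun s hs => ?_)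
    (fun t ht => ?_) (fun s _ => Fin.init_snoc _ _)
  · simp only [coe_filter, mem_finMulAntidiag, Fin.prod_univ_castSucc, Prod.ext_iff] at ht
    simp only [mem_coe, mem_finMulAntidiag]
    exact ⟨ht.2.1, left_ne_zero_of_mul (hx ▸ hm)⟩
  · simp only [mem_coe, mem_finMulAntidiag] at hs
    simp [Fin.prod_univ_castSucc, hs.1, hx, hm]
  · simp only [coe_filter, mem_finMulAntidiag, Fin.prod_univ_castSucc, Prod.ext_iff] at ht
    rw [← ht.2.2]
    exact Fin.snoc_init_self t

theorem card_finMulAntidiag_eq_zeta_pow_apply (k m : ℕ) : #(finMulAntidiag k m) = τ k m := by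
  induction k generalizing m with
  | zero =>
    rcases eq_or_ne m 1 with rfl | hm
    · simp [finMulAntidiag_one]
    · simp [finMulAntidiag_zero_left hm, one_apply_ne hm]
  | succ k ih =>
    rw [card_finMulAntidiag_succ, pow_succ, mul_apply]
    refine sum_congr rfl fun x hx => ?_
    obtain ⟨hx, hm⟩ := mem_divisorsAntidiagonal.1 hx
    rw [ih, zeta_apply_ne (right_ne_zero_of_mul (hx ▸ hm)), mul_one]

end Nat

theorem tauk_eq_zeta_pow_apply (k : ℕ) {m : ℕ} (hm : m ≠ 0) : tauk k m = τ k m := by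
  rw [← Nat.card_finMulAntidiag_eq_zeta_pow_apply, tauk]
  congr 1
  ext t
  simp only [mem_filter, Fintype.mem_piFinset, mem_range, Nat.mem_finMulAntidiag, hm, ne_eq,
    not_false_eq_true, and_true, and_iff_right_iff_imp]
  exact fun ht i => Nat.lt_succ_of_le <|
    Nat.le_of_dvd (Nat.pos_of_ne_zero hm) (ht ▸ dvd_prod_of_mem t (mem_univ i))

namespace ArithmeticFunction

theorem zeta_pow_apply_prime_pow (k : ℕ) {p : ℕ} (hp : p.Prime) (e : ℕ) :
    τ k (p ^ e) = k.multichoose e := by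
  induction k generalizing e with
  | zero =>
    rcases e with _ | e
    · simp
    · simp [one_apply_ne, hp.one_lt.ne']
  | succ k ih =>
    rw [pow_succ, mul_zeta_apply, Nat.divisors_prime_pow hp, sum_map]
    simp only [Function.Embedding.coeFn_mk, ih]
    rw [Nat.sum_range_multichoose, Nat.multichoose_eq, show k + 1 + e - 1 = e + k by omega,
      Nat.choose_symm_add]

theorem isMultiplicative_zeta_pow (k : ℕ) : (τ k).IsMultiplicative :=
  isMultiplicative_zeta.pow

theorem IsMultiplicative.apply_le_of_prime_pow {f g : ArithmeticFunction ℕ}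
    (hf : f.IsMultiplicative) (hg : g.IsMultiplicative)
    (h : ∀ p e : ℕ, p.Prime → e ≠ 0 → f (p ^ e) ≤ g (p ^ e)) {n : ℕ} (hn : n ≠ 0) :
    f n ≤ g n := by
  rw [hf.multiplicative_factorization f hn, hg.multiplicative_factorization g hn]
  refine prod_le_prod' fun p hp => h p _ (Nat.prime_of_mem_primeFactors (n := n) ?_) ?_
  · rwa [← Nat.support_factorization]
  · exact Finsupp.mem_support_iff.mp hp

def predIndicator (P : ℕ → Prop) [DecidablePred P] : ArithmeticFunction ℕ :=
  ⟨fun n => if n ≠ 0 ∧ P n then 1 else 0, by simp⟩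

theorem predIndicator_apply (P : ℕ → Prop) [DecidablePred P] (n : ℕ) :
    predIndicator P n = if n ≠ 0 ∧ P n then 1 else 0 := rfl

theorem isMultiplicative_predIndicator {P : ℕ → Prop} [DecidablePred P] (h1 : P 1)
    (hmul : ∀ {m n : ℕ}, m.Coprime n → (P (m * n) ↔ P m ∧ P n)) :
    (predIndicator P).IsMultiplicative := by
  refine ⟨by simp [predIndicator_apply, h1], fun {m n} hmn => ?_⟩
  simp only [predIndicator_apply, hmul hmn, mul_ne_zero_iff]
  split_ifs <;> simp_all

theorem isMultiplicative_predIndicator_squarefree :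
    (predIndicator Squarefree).IsMultiplicative :=
  isMultiplicative_predIndicator squarefree_one Nat.squarefree_mul

theorem isMultiplicative_predIndicator_isSquare :
    (predIndicator IsSquare).IsMultiplicative :=
  isMultiplicative_predIndicator IsSquare.one Nat.Coprime.isSquare_mul_iff

def compSq {R : Type*} [Zero R] (f : ArithmeticFunction R) : ArithmeticFunction R :=
  ⟨fun n => f (n ^ 2), by simp⟩

theorem compSq_apply {R : Type*} [Zero R] (f : ArithmeticFunction R) (n : ℕ) :
    f.compSq n = f (n ^ 2) := rfl

theorem IsMultiplicative.compSq {R : Type*} [MonoidWithZero R] {f : ArithmeticFunction R}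
    (hf : f.IsMultiplicative) : f.compSq.IsMultiplicative :=
  ⟨by simp [compSq_apply, hf.map_one], fun hmn => by
    simp only [compSq_apply, mul_pow, hf.map_mul_of_coprime (hmn.pow 2 2)]⟩

theorem sq_zeta_pow_apply_le (k : ℕ) {n : ℕ} (hn : n ≠ 0) : τ k n ^ 2 ≤ τ (k ^ 2) n := by
  refine (ppow_apply two_pos).symm.le.trans <|
    (isMultiplicative_zeta_pow k).ppow.apply_le_of_prime_pow
      (isMultiplicative_zeta_pow _) (fun p e hp _ => ?_) hn
  rw [ppow_apply two_pos, zeta_pow_apply_prime_pow _ hp, zeta_pow_apply_prime_pow _ hp]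
  exact Nat.multichoose_sq_le k e

theorem zeta_pow_apply_sq_le_sq {k : ℕ} (hk : 1 ≤ k) {n : ℕ} (hn : n ≠ 0) :
    τ k (n ^ 2) ≤ τ k n ^ 2 := by
  refine ((isMultiplicative_zeta_pow k).compSq.apply_le_of_prime_pow
      (isMultiplicative_zeta_pow k).ppow (fun p e hp _ => ?_) hn).trans (ppow_apply two_pos).le
  rw [compSq_apply, ppow_apply two_pos, ← pow_mul, mul_comm, zeta_pow_apply_prime_pow _ hp,
    zeta_pow_apply_prime_pow _ hp]
  exact Nat.multichoose_two_mul_le hk e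

theorem zeta_pow_apply_le_mul (K : ℕ) {n : ℕ} (hn : n ≠ 0) :
    τ K n ≤ ((τ K).pmul (predIndicator Squarefree) * (τ K).pmul (predIndicator IsSquare)) n := by
  refine (isMultiplicative_zeta_pow K).apply_le_of_prime_pow
    (((isMultiplicative_zeta_pow K).pmul isMultiplicative_predIndicator_squarefree).mul
      ((isMultiplicative_zeta_pow K).pmul isMultiplicative_predIndicator_isSquare))
    (fun p e hp _ => ?_) hn
  have hsq (t : ℕ) : (τ K).pmul (predIndicator IsSquare) (p ^ (2 * t)) = K.multichoose (2 * t) := by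
    rw [pmul_apply, predIndicator_apply, if_pos ⟨pow_ne_zero _ hp.ne_zero, p ^ t, by ring⟩,
      mul_one, zeta_pow_apply_prime_pow _ hp]
  rw [mul_apply, zeta_pow_apply_prime_pow _ hp]
  -- keep only the term `1 · p^(2t)`, resp. `p · p^(2t)`, of the convolution
  obtain ⟨t, rfl | rfl⟩ := Nat.even_or_odd' e
  · refine le_of_eq_of_le ?_ (single_le_sum (a := (1, p ^ (2 * t))) (fun _ _ => Nat.zero_le _)
      (Nat.mem_divisorsAntidiagonal.2 ⟨one_mul _, pow_ne_zero _ hp.ne_zero⟩))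
    simp [hsq, predIndicator_apply, (isMultiplicative_zeta_pow K).map_one]
  · refine le_trans ?_ (single_le_sum (a := (p, p ^ (2 * t))) (fun _ _ => Nat.zero_le _)
      (Nat.mem_divisorsAntidiagonal.2 ⟨(pow_succ' p (2 * t)).symm, pow_ne_zero _ hp.ne_zero⟩))
    rw [hsq, pmul_apply, predIndicator_apply, if_pos ⟨hp.ne_zero, hp.squarefree⟩, mul_one,
      ← pow_one p, zeta_pow_apply_prime_pow _ hp, Nat.multichoose_one_right]
    exact Nat.multichoose_succ_le K (2 * t)

theorem pmul_predIndicator_squarefree_apply_le (k : ℕ) {n : ℕ} (hn : n ≠ 0) :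
    (τ (k ^ 2)).pmul (predIndicator Squarefree) n ≤ τ k n ^ 2 := by
  refine (((isMultiplicative_zeta_pow _).pmul
    isMultiplicative_predIndicator_squarefree).apply_le_of_prime_pow
      (isMultiplicative_zeta_pow k).ppow (fun p e hp he => ?_) hn).trans (ppow_apply two_pos).le
  rw [pmul_apply, predIndicator_apply, ppow_apply two_pos]
  split_ifs with h
  · obtain rfl : e = 1 := ((Nat.squarefree_pow_iff hp.ne_one he).1 h.2).2
    rw [pow_one, ← pow_one p, zeta_pow_apply_prime_pow _ hp, zeta_pow_apply_prime_pow _ hp,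
      Nat.multichoose_one_right, Nat.multichoose_one_right, mul_one]
  · rw [mul_zero]
    exact Nat.zero_le _

end ArithmeticFunction

theorem Nat.sum_sum_divisorsAntidiagonal_eq_sum_biUnion {M : Type*} [AddCommMonoid M]
    (S : Finset ℕ) (F : ℕ × ℕ → M) :
    ∑ m ∈ S, ∑ x ∈ m.divisorsAntidiagonal, F x = ∑ x ∈ S.biUnion divisorsAntidiagonal, F x := by
  refine (sum_biUnion fun a _ b _ hab => disjoint_left.2 fun x hxa hxb => hab ?_).symm
  exact (mem_divisorsAntidiagonal.1 hxa).1.symm.trans (mem_divisorsAntidiagonal.1 hxb).1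

theorem cast_mul_apply_div_pow (f g : ArithmeticFunction ℕ) (c m : ℕ) :
    ((f * g) m : ℝ) / (m : ℝ) ^ c =
      ∑ x ∈ m.divisorsAntidiagonal,
        (f x.1 : ℝ) / (x.1 : ℝ) ^ c * ((g x.2 : ℝ) / (x.2 : ℝ) ^ c) := by
  rw [mul_apply, Nat.cast_sum, sum_div]
  refine sum_congr rfl fun x hx => ?_
  rw [← (Nat.mem_divisorsAntidiagonal.1 hx).1]
  push_cast
  rw [mul_pow, mul_div_mul_comm]

theorem sum_mul_apply_div_pow_le (f g : ArithmeticFunction ℕ) (c : ℕ) {S A B : Finset ℕ}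
    (h : ∀ a b, a * b ∈ S → a ∈ A ∧ b ∈ B) :
    ∑ m ∈ S, ((f * g) m : ℝ) / (m : ℝ) ^ c ≤
      (∑ a ∈ A, (f a : ℝ) / (a : ℝ) ^ c) * ∑ b ∈ B, (g b : ℝ) / (b : ℝ) ^ c := by
  simp_rw [cast_mul_apply_div_pow, Nat.sum_sum_divisorsAntidiagonal_eq_sum_biUnion, sum_mul_sum,
    ← sum_product']
  refine sum_le_sum_of_subset_of_nonneg (fun x hx => ?_) fun _ _ _ => by positivity
  obtain ⟨m, hm, hx⟩ := mem_biUnion.1 hx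
  exact mem_product.2 (h _ _ ((Nat.mem_divisorsAntidiagonal.1 hx).1 ▸ hm))

theorem sum_mul_sum_div_pow_le_sum_mul_apply (f g : ArithmeticFunction ℕ) (c : ℕ)
    {S A B : Finset ℕ} (h0 : 0 ∉ S) (h : ∀ a ∈ A, ∀ b ∈ B, a * b ∈ S) :
    (∑ a ∈ A, (f a : ℝ) / (a : ℝ) ^ c) * ∑ b ∈ B, (g b : ℝ) / (b : ℝ) ^ c ≤
      ∑ m ∈ S, ((f * g) m : ℝ) / (m : ℝ) ^ c := by
  simp_rw [cast_mul_apply_div_pow, Nat.sum_sum_divisorsAntidiagonal_eq_sum_biUnion, sum_mul_sum,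
    ← sum_product']
  refine sum_le_sum_of_subset_of_nonneg (fun x hx => ?_) fun _ _ _ => by positivity
  obtain ⟨ha, hb⟩ := mem_product.1 hx
  have hS := h _ ha _ hb
  exact mem_biUnion.2 ⟨_, hS, Nat.mem_divisorsAntidiagonal.2 ⟨rfl, ne_of_mem_of_not_mem hS h0⟩⟩

theorem sum_zeta_div_pow {S : Finset ℕ} (hS : 0 ∉ S) (c : ℕ) :
    ∑ b ∈ S, ((ζ b : ℕ) : ℝ) / (b : ℝ) ^ c = ∑ b ∈ S, 1 / (b : ℝ) ^ c :=
  sum_congr rfl fun b hb => by rw [zeta_apply_ne (ne_of_mem_of_not_mem hb hS), Nat.cast_one]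

theorem sum_zeta_pow_div_pow_le (J N c : ℕ) :
    ∑ m ∈ Icc 1 N, (τ J m : ℝ) / (m : ℝ) ^ c ≤ (∑ n ∈ Icc 1 N, 1 / (n : ℝ) ^ c) ^ J := by
  induction J with
  | zero =>
    simp only [pow_zero, one_apply, Nat.cast_ite, Nat.cast_one, Nat.cast_zero, ite_div, zero_div,
      sum_ite_eq', mem_Icc]
    split_ifs <;> norm_num
  | succ J ih =>
    calc _ ≤ (∑ a ∈ Icc 1 N, (τ J a : ℝ) / (a : ℝ) ^ c) *
          ∑ b ∈ Icc 1 N, ((ζ b : ℕ) : ℝ) / (b : ℝ) ^ c := by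
          rw [pow_succ]
          exact sum_mul_apply_div_pow_le _ _ c fun a b => Nat.mem_Icc_of_mul_mem_Icc
      _ ≤ _ := by
          rw [sum_zeta_div_pow (by simp), pow_succ]
          gcongr

theorem pow_sum_odd_div_pow_le_sum_odd_zeta_pow (J N c : ℕ) :
    (∑ n ∈ {n ∈ Icc 1 N | Odd n}, 1 / (n : ℝ) ^ c) ^ J ≤
      ∑ m ∈ {m ∈ Icc 1 (N ^ J) | Odd m}, (τ J m : ℝ) / (m : ℝ) ^ c := by
  induction J with
  | zero => simp [one_apply, filter_singleton]
  | succ J ih =>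
    calc _ ≤ (∑ a ∈ {m ∈ Icc 1 (N ^ J) | Odd m}, (τ J a : ℝ) / (a : ℝ) ^ c) *
          ∑ b ∈ {n ∈ Icc 1 N | Odd n}, ((ζ b : ℕ) : ℝ) / (b : ℝ) ^ c := by
          rw [sum_zeta_div_pow (by simp), pow_succ]
          gcongr
      _ ≤ _ := by
          rw [pow_succ, pow_succ]
          refine sum_mul_sum_div_pow_le_sum_mul_apply _ _ c (by simp) fun a ha b hb => ?_
          simp only [mem_filter, mem_Icc] at ha hb ⊢
          exact ⟨⟨Nat.mul_le_mul ha.1.1 hb.1.1, Nat.mul_le_mul ha.1.2 hb.1.2⟩, ha.2.mul hb.2⟩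

theorem sum_Icc_inv_le_two_mul_sum_odd (N : ℕ) :
    ∑ n ∈ Icc 1 N, (n : ℝ)⁻¹ ≤ 2 * ∑ n ∈ {n ∈ Icc 1 N | Odd n}, (n : ℝ)⁻¹ := by
  rw [← sum_filter_add_sum_filter_not (Icc 1 N) Odd, two_mul, add_le_add_iff_left]
  have heven {n : ℕ} (hn : n ∈ {n ∈ Icc 1 N | ¬Odd n}) : 2 ≤ n ∧ n ≤ N ∧ Even n := by
    simp only [mem_filter, mem_Icc, Nat.not_odd_iff_even] at hn
    obtain ⟨⟨h1, h2⟩, he⟩ := hn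
    exact ⟨by obtain ⟨r, rfl⟩ := he; omega, h2, he⟩
  -- compare each even `n` with the odd number `n - 1`
  have hinj : Set.InjOn (fun n : ℕ => n - 1) ↑({n ∈ Icc 1 N | ¬Odd n} : Finset ℕ) :=
    fun a ha b hb hab => by
      have := heven (n := a) ha
      have := heven (n := b) hb
      simp only at hab
      omega
  calc ∑ n ∈ {n ∈ Icc 1 N | ¬Odd n}, (n : ℝ)⁻¹
      ≤ ∑ n ∈ {n ∈ Icc 1 N | ¬Odd n}, ((n - 1 : ℕ) : ℝ)⁻¹ := sum_le_sum fun n hn => by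
        have := (heven hn).1
        exact inv_anti₀ (by norm_cast; omega) (by norm_cast; omega)
    _ = ∑ m ∈ {n ∈ Icc 1 N | ¬Odd n}.image (fun n : ℕ => n - 1), (m : ℝ)⁻¹ :=
        (sum_image (f := fun m : ℕ => (m : ℝ)⁻¹) hinj).symm
    _ ≤ _ := sum_le_sum_of_subset_of_nonneg (fun m hm => ?_) fun _ _ _ => by positivity
  obtain ⟨n, hn, rfl⟩ := mem_image.1 hm
  obtain ⟨h2, hN, r, rfl⟩ := heven hn
  simp only [mem_filter, mem_Icc]
  exact ⟨by omega, r - 1, by omega⟩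

theorem cast_harmonic_eq_sum_Icc (N : ℕ) : (harmonic N : ℝ) = ∑ n ∈ Icc 1 N, (n : ℝ)⁻¹ := by
  rw [harmonic_eq_sum_Icc]
  push_cast
  rfl

theorem log_div_le_sum_odd_inv (K : ℕ) {x : ℝ} (hx : 0 < x) :
    Real.log x / (2 * K) ≤ ∑ n ∈ {n ∈ Icc 1 ⌊x ^ (K : ℝ)⁻¹⌋₊ | Odd n}, (n : ℝ)⁻¹ := by
  have hlog : Real.log (x ^ (K : ℝ)⁻¹) = Real.log x / K := by
    rw [Real.log_rpow hx, inv_mul_eq_div]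
  have hharm := log_le_harmonic_floor _ (Real.rpow_nonneg hx.le (K : ℝ)⁻¹)
  rw [hlog, cast_harmonic_eq_sum_Icc] at hharm
  have hodd := sum_Icc_inv_le_two_mul_sum_odd ⌊x ^ (K : ℝ)⁻¹⌋₊
  rw [mul_comm, ← div_div]
  linarith

theorem floor_rpow_inv_pow_le {K : ℕ} (hK : K ≠ 0) {x : ℝ} (hx : 0 ≤ x) :
    ⌊x ^ (K : ℝ)⁻¹⌋₊ ^ K ≤ ⌊x⌋₊ := by
  refine Nat.le_floor ?_
  push_cast
  calc (⌊x ^ (K : ℝ)⁻¹⌋₊ : ℝ) ^ K ≤ (x ^ (K : ℝ)⁻¹) ^ K := by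
        gcongr
        exact Nat.floor_le (by positivity)
    _ = x := Real.rpow_inv_natCast_pow hx hK

theorem cast_harmonic_floor_le {x : ℝ} (hx : 2 ≤ x) :
    (harmonic ⌊x⌋₊ : ℝ) ≤ (1 + (Real.log 2)⁻¹) * Real.log x := by
  have hlog2 : 0 < Real.log 2 := Real.log_pos one_lt_two
  have h1 : 1 ≤ Real.log x * (Real.log 2)⁻¹ := by
    rw [← div_eq_mul_inv, one_le_div hlog2]
    exact Real.log_le_log two_pos hx
  have h2 : Real.log ⌊x⌋₊ ≤ Real.log x :=
    Real.log_le_log (by exact_mod_cast Nat.floor_pos.2 (by linarith)) (Nat.floor_le (by linarith))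
  linarith [harmonic_le_one_add_log ⌊x⌋₊]

theorem sum_inv_sq_le_two (N : ℕ) : ∑ n ∈ Icc 1 N, 1 / (n : ℝ) ^ 2 ≤ 2 := by
  have hIcc : Icc 1 N = Ioo 0 (N + 1) := by
    ext n
    simp only [mem_Icc, mem_Ioo]
    omega
  simpa [hIcc, one_div] using sum_Ioo_inv_sq_le (α := ℝ) 0 (N + 1)

theorem sum_pmul_isSquare_div_le {K : ℕ} (hK : 1 ≤ K) (N : ℕ) :
    ∑ b ∈ Icc 1 N, ((τ K).pmul (predIndicator IsSquare) b : ℝ) / b ≤ 2 ^ (K ^ 2) := by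
  set h := (τ K).pmul (predIndicator IsSquare)
  have hinj : Set.InjOn (fun s : ℕ => s ^ 2) ↑(Icc 1 N) :=
    fun a _ b _ hab => Nat.pow_left_injective two_ne_zero hab
  calc ∑ b ∈ Icc 1 N, (h b : ℝ) / b
      = ∑ b ∈ {b ∈ Icc 1 N | IsSquare b}, (h b : ℝ) / b := by
        refine (sum_filter_of_ne fun b _ hb => ?_).symm
        by_contra hsq
        simp [h, pmul_apply, predIndicator_apply, hsq] at hb
    _ ≤ ∑ b ∈ (Icc 1 N).image (fun s => s ^ 2), (h b : ℝ) / b := by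
        refine sum_le_sum_of_subset_of_nonneg (fun b hb => ?_) fun _ _ _ => by positivity
        obtain ⟨hbN, s, rfl⟩ := mem_filter.1 hb
        exact mem_image.2 ⟨s, (Nat.mem_Icc_of_mul_mem_Icc hbN).1, sq s⟩
    _ = ∑ s ∈ Icc 1 N, (h (s ^ 2) : ℝ) / (s : ℝ) ^ 2 := by
        rw [sum_image hinj]
        push_cast
        rfl
    _ ≤ ∑ s ∈ Icc 1 N, (τ (K ^ 2) s : ℝ) / (s : ℝ) ^ 2 := by
        refine sum_le_sum fun s hs => ?_
        have hs0 : s ≠ 0 := by simp at hs; omega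
        gcongr
        rw [pmul_apply, predIndicator_apply, if_pos ⟨pow_ne_zero 2 hs0, s, sq s⟩, mul_one]
        exact_mod_cast (zeta_pow_apply_sq_le_sq hK hs0).trans (sq_zeta_pow_apply_le K hs0)
    _ ≤ (∑ s ∈ Icc 1 N, 1 / (s : ℝ) ^ 2) ^ (K ^ 2) := sum_zeta_pow_div_pow_le _ _ _
    _ ≤ 2 ^ (K ^ 2) := by
        gcongr
        exact sum_inv_sq_le_two N

theorem sum_odd_zeta_pow_div_le {K : ℕ} (hK : 1 ≤ K) (N : ℕ) :
    ∑ m ∈ {m ∈ Icc 1 N | Odd m}, (τ K m : ℝ) / m ≤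
      2 ^ (K ^ 2) *
        ∑ a ∈ {a ∈ Icc 1 N | Odd a}, ((τ K).pmul (predIndicator Squarefree) a : ℝ) / a := by
  rw [mul_comm]
  calc _ ≤ ∑ m ∈ {m ∈ Icc 1 N | Odd m}, (((τ K).pmul (predIndicator Squarefree) *
          (τ K).pmul (predIndicator IsSquare)) m : ℝ) / (m : ℝ) ^ 1 := by
        refine sum_le_sum fun m hm => ?_
        have hm0 : m ≠ 0 := by simp at hm; omega
        rw [pow_one]
        gcongr
        exact_mod_cast zeta_pow_apply_le_mul K hm0
    _ ≤ _ := by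
        refine (sum_mul_apply_div_pow_le _ _ 1 (A := {a ∈ Icc 1 N | Odd a}) (B := Icc 1 N)
          fun a b hab => ?_).trans ?_
        · simp only [mem_filter, Nat.odd_mul] at hab ⊢
          exact ⟨⟨(Nat.mem_Icc_of_mul_mem_Icc hab.1).1, hab.2.1⟩,
            (Nat.mem_Icc_of_mul_mem_Icc hab.1).2⟩
        · simp only [pow_one]
          gcongr
          exact sum_pmul_isSquare_div_le hK N

theorem sum_tauk_sq_div_le (k : ℕ) {x : ℝ} (hx : 2 ≤ x) :
    ∑ m ∈ Icc 1 ⌊x⌋₊, (tauk k m : ℝ) ^ 2 / m ≤ ((1 + (Real.log 2)⁻¹) * Real.log x) ^ (k ^ 2) := by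
  calc ∑ m ∈ Icc 1 ⌊x⌋₊, (tauk k m : ℝ) ^ 2 / m
      ≤ ∑ m ∈ Icc 1 ⌊x⌋₊, (τ (k ^ 2) m : ℝ) / (m : ℝ) ^ 1 := by
        refine sum_le_sum fun m hm => ?_
        have hm0 : m ≠ 0 := by simp at hm; omega
        rw [pow_one, tauk_eq_zeta_pow_apply k hm0]
        gcongr
        exact_mod_cast sq_zeta_pow_apply_le k hm0
    _ ≤ (harmonic ⌊x⌋₊ : ℝ) ^ (k ^ 2) := by
        simpa [cast_harmonic_eq_sum_Icc] using sum_zeta_pow_div_pow_le (k ^ 2) ⌊x⌋₊ 1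
    _ ≤ _ := by
        gcongr
        · rw [cast_harmonic_eq_sum_Icc]
          positivity
        · exact cast_harmonic_floor_le hx

theorem log_div_pow_le_sum_odd_tauk_sq_div {k : ℕ} (hk : 1 ≤ k) {x : ℝ} (hx : 1 ≤ x) :
    (Real.log x / (2 * k ^ 2)) ^ (k ^ 2) ≤
      2 ^ ((k ^ 2) ^ 2) * ∑ m ∈ {m ∈ Icc 1 ⌊x⌋₊ | Odd m}, (tauk k m : ℝ) ^ 2 / m := by
  have hK : 1 ≤ k ^ 2 := Nat.one_le_pow _ _ hk
  have hx0 : 0 < x := by linarith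
  calc (Real.log x / (2 * k ^ 2)) ^ (k ^ 2)
      ≤ (∑ n ∈ {n ∈ Icc 1 ⌊x ^ ((k ^ 2 : ℕ) : ℝ)⁻¹⌋₊ | Odd n}, 1 / (n : ℝ) ^ 1) ^ (k ^ 2) := by
        gcongr
        · exact div_nonneg (Real.log_nonneg hx) (by positivity)
        · have := log_div_le_sum_odd_inv (k ^ 2) hx0
          simp only [one_div, pow_one]
          exact_mod_cast this
    _ ≤ ∑ m ∈ {m ∈ Icc 1 (⌊x ^ ((k ^ 2 : ℕ) : ℝ)⁻¹⌋₊ ^ (k ^ 2)) | Odd m},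
          (τ (k ^ 2) m : ℝ) / (m : ℝ) ^ 1 :=
        pow_sum_odd_div_pow_le_sum_odd_zeta_pow _ _ _
    _ ≤ ∑ m ∈ {m ∈ Icc 1 ⌊x⌋₊ | Odd m}, (τ (k ^ 2) m : ℝ) / m := by
        simp only [pow_one]
        refine sum_le_sum_of_subset_of_nonneg (filter_subset_filter _ (Icc_subset_Icc_right
          (floor_rpow_inv_pow_le (by positivity) hx0.le))) fun _ _ _ => by positivity
    _ ≤ 2 ^ ((k ^ 2) ^ 2) * ∑ m ∈ {m ∈ Icc 1 ⌊x⌋₊ | Odd m},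
          ((τ (k ^ 2)).pmul (predIndicator Squarefree) m : ℝ) / m :=
        sum_odd_zeta_pow_div_le hK _
    _ ≤ _ := by
        gcongr with m hm
        have hm0 : m ≠ 0 := by simp at hm; omega
        rw [tauk_eq_zeta_pow_apply k hm0]
        exact_mod_cast pmul_predIndicator_squarefree_apply_le k hm0

/-- for every `k ≥ 1` there are constants `c1, c2 > 0` such that for all
`x ≥ 2`:
`c1 (log x)^{k²} ≤ Σ_{m ≤ x, m odd} τ_k(m)²/m ≤ Σ_{m ≤ x} τ_k(m)²/m ≤ c2 (log x)^{k²}`. -/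
theorem tauk_squared_partial_sums (k : ℕ) (hk : 1 ≤ k) :
    ∃ c1 > (0 : ℝ), ∃ c2 > (0 : ℝ), ∀ x : ℝ, 2 ≤ x →
      c1 * (Real.log x) ^ (k ^ 2) ≤
          ∑ m ∈ Finset.Icc 1 ⌊x⌋₊, (if Odd m then (tauk k m : ℝ) ^ 2 / m else 0) ∧
      ∑ m ∈ Finset.Icc 1 ⌊x⌋₊, (if Odd m then (tauk k m : ℝ) ^ 2 / m else 0) ≤
          ∑ m ∈ Finset.Icc 1 ⌊x⌋₊, (tauk k m : ℝ) ^ 2 / m ∧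
      ∑ m ∈ Finset.Icc 1 ⌊x⌋₊, (tauk k m : ℝ) ^ 2 / m ≤ c2 * (Real.log x) ^ (k ^ 2) := by
  have hk0 : (0 : ℝ) < k := by exact_mod_cast hk
  refine ⟨(2 * k ^ 2 : ℝ)⁻¹ ^ (k ^ 2) / 2 ^ ((k ^ 2) ^ 2), by positivity,
    (1 + (Real.log 2)⁻¹) ^ (k ^ 2), by positivity, fun x hx => ⟨?_, ?_, ?_⟩⟩
  · rw [← sum_filter]
    calc _ = (Real.log x / (2 * k ^ 2)) ^ (k ^ 2) / 2 ^ ((k ^ 2) ^ 2) := by ring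
      _ ≤ _ := by
        rw [div_le_iff₀' (by positivity)]
        exact log_div_pow_le_sum_odd_tauk_sq_div hk (one_le_two.trans hx)
  · refine sum_le_sum fun m _ => ?_
    split_ifs
    · exact le_rfl
    · positivity
  · rw [← mul_pow]
    exact sum_tauk_sq_div_le k hx
end

section
/- Let D(s) = Π_p (1 + c1 p^{-(1/2+s)} + c2 p^{-2(1/2+s)} + ⋯) be the Euler product whose p-power coefficients c_r count, for each r ≥ 0, the number of solutions of the combinatorial system arising from 2k-fold products of GL(3) Hecke coefficients A(m^2,1) (as in the proof of Lemma on S2 upper bound in the paper). Then c1 = 0 and c2 = k^2. Consequently, for each prime p the local factor equals 1 + k^2 p^{-1-2s} + O_k(p^{-3(1/2+Re s)}) with the coefficient of each p^{-r(1/2+s)} bounded by (r+1)^{6k}. -/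
open Finset

/-- The solution set of the combinatorial system arising from the `2k`-fold products of
GL(3) Hecke coefficients in the Euler factor of `D(s)`.  All variables are powers of the
prime `p`, recorded here by their exponents:
`a i` is the exponent of `a_i` (for `1 ≤ i ≤ k`), and `α1 i, α2 i, β1 i, β2 i` are the
exponents of `α_{i,1}, α_{i,2}, β_{i,1}, β_{i,2}` (for `2 ≤ i ≤ k`); entries outside these
ranges are `0`.  The conditions are the exponent form of
`α_{j,1}α_{j,2} ∣ a_j²`,
`α_{j,1} ∣ (a_1²⋯a_{j-1}²)/(α_{2,1}²α_{2,2}⋯α_{j-1,1}²α_{j-1,2})`,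
`α_{j,2} ∣ (α_{2,1}⋯α_{j-1,1})/(α_{2,2}⋯α_{j-1,2})` (and likewise for the `β`'s), the two
matching (delta) conditions, and the total weight `a_1⋯a_k b_1⋯b_k = p^r`. -/
def heckeEulerSolutions (k r : ℕ) :
    Set ((ℕ → ℕ) × (ℕ → ℕ) × (ℕ → ℕ) × (ℕ → ℕ) × (ℕ → ℕ) × (ℕ → ℕ)) :=
  {t | ∀ (a : ℕ → ℕ) (α1 : ℕ → ℕ) (α2 : ℕ → ℕ) (b : ℕ → ℕ) (β1 : ℕ → ℕ) (β2 : ℕ → ℕ),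
      t = (a, α1, α2, b, β1, β2) →
    ((∀ i : ℕ, i = 0 ∨ k < i → a i = 0 ∧ b i = 0) ∧
     (∀ i : ℕ, i ≤ 1 ∨ k < i → α1 i = 0 ∧ α2 i = 0 ∧ β1 i = 0 ∧ β2 i = 0) ∧
     (∑ i ∈ Finset.Icc 1 k, (a i + b i)) = r ∧
     (∀ j ∈ Finset.Icc 2 k,
        α1 j + α2 j ≤ 2 * a j ∧
        α1 j + ∑ i ∈ Finset.Icc 2 (j - 1), (2 * α1 i + α2 i) ≤
          ∑ i ∈ Finset.Icc 1 (j - 1), 2 * a i ∧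
        α2 j + ∑ i ∈ Finset.Icc 2 (j - 1), α2 i ≤ ∑ i ∈ Finset.Icc 2 (j - 1), α1 i ∧
        β1 j + β2 j ≤ 2 * b j ∧
        β1 j + ∑ i ∈ Finset.Icc 2 (j - 1), (2 * β1 i + β2 i) ≤
          ∑ i ∈ Finset.Icc 1 (j - 1), 2 * b i ∧
        β2 j + ∑ i ∈ Finset.Icc 2 (j - 1), β2 i ≤ ∑ i ∈ Finset.Icc 2 (j - 1), β1 i) ∧
     ((∑ i ∈ Finset.Icc 1 k, 2 * a i) + ∑ i ∈ Finset.Icc 2 k, (2 * β1 i + β2 i) =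
        (∑ i ∈ Finset.Icc 1 k, 2 * b i) + ∑ i ∈ Finset.Icc 2 k, (2 * α1 i + α2 i)) ∧
     ((∑ i ∈ Finset.Icc 2 k, α1 i) + ∑ i ∈ Finset.Icc 2 k, β2 i =
        (∑ i ∈ Finset.Icc 2 k, β1 i) + ∑ i ∈ Finset.Icc 2 k, α2 i))}

lemma hecke_mem_iff {k r : ℕ} {a α1 α2 b β1 β2 : ℕ → ℕ} :
    (a, α1, α2, b, β1, β2) ∈ heckeEulerSolutions k r ↔
    ((∀ i : ℕ, i = 0 ∨ k < i → a i = 0 ∧ b i = 0) ∧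
     (∀ i : ℕ, i ≤ 1 ∨ k < i → α1 i = 0 ∧ α2 i = 0 ∧ β1 i = 0 ∧ β2 i = 0) ∧
     (∑ i ∈ Finset.Icc 1 k, (a i + b i)) = r ∧
     (∀ j ∈ Finset.Icc 2 k,
        α1 j + α2 j ≤ 2 * a j ∧
        α1 j + ∑ i ∈ Finset.Icc 2 (j - 1), (2 * α1 i + α2 i) ≤
          ∑ i ∈ Finset.Icc 1 (j - 1), 2 * a i ∧
        α2 j + ∑ i ∈ Finset.Icc 2 (j - 1), α2 i ≤ ∑ i ∈ Finset.Icc 2 (j - 1), α1 i ∧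
        β1 j + β2 j ≤ 2 * b j ∧
        β1 j + ∑ i ∈ Finset.Icc 2 (j - 1), (2 * β1 i + β2 i) ≤
          ∑ i ∈ Finset.Icc 1 (j - 1), 2 * b i ∧
        β2 j + ∑ i ∈ Finset.Icc 2 (j - 1), β2 i ≤ ∑ i ∈ Finset.Icc 2 (j - 1), β1 i) ∧
     ((∑ i ∈ Finset.Icc 1 k, 2 * a i) + ∑ i ∈ Finset.Icc 2 k, (2 * β1 i + β2 i) =
        (∑ i ∈ Finset.Icc 1 k, 2 * b i) + ∑ i ∈ Finset.Icc 2 k, (2 * α1 i + α2 i)) ∧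
     ((∑ i ∈ Finset.Icc 2 k, α1 i) + ∑ i ∈ Finset.Icc 2 k, β2 i =
        (∑ i ∈ Finset.Icc 2 k, β1 i) + ∑ i ∈ Finset.Icc 2 k, α2 i)) := by
  constructor
  · exact fun h => h a α1 α2 b β1 β2 rfl
  · intro h a' α1' α2' b' β1' β2' he
    rw [Prod.mk.injEq, Prod.mk.injEq, Prod.mk.injEq, Prod.mk.injEq, Prod.mk.injEq] at he
    obtain ⟨rfl, rfl, rfl, rfl, rfl, rfl⟩ := he
    exact h

lemma hecke_cumul {k : ℕ} {a α1 α2 : ℕ → ℕ}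
    (h : ∀ j ∈ Finset.Icc 2 k, α1 j + α2 j ≤ 2 * a j ∧
        α1 j + ∑ i ∈ Finset.Icc 2 (j - 1), (2 * α1 i + α2 i) ≤
          ∑ i ∈ Finset.Icc 1 (j - 1), 2 * a i) :
    ∀ j, 1 ≤ j → j ≤ k →
      ∑ i ∈ Finset.Icc 2 j, (2 * α1 i + α2 i) ≤ ∑ i ∈ Finset.Icc 1 j, 2 * a i := by
  intro j hj1
  induction j, hj1 using Nat.le_induction with
  | base =>
    intro _
    rw [show (1:ℕ) = 2 - 1 from rfl, Finset.Icc_self]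
    simp [Finset.Icc_eq_empty_of_lt (show (1:ℕ) < 2 by omega)]
  | succ j hj ih =>
    intro hjk
    have hih := ih (by omega)
    obtain ⟨h1, h2⟩ := h (j + 1) (by simp only [Finset.mem_Icc]; omega)
    rw [Nat.add_sub_cancel] at h2
    rw [Finset.sum_Icc_succ_top (show 2 ≤ j + 1 by omega),
      Finset.sum_Icc_succ_top (show 1 ≤ j + 1 by omega)]
    omega

lemma alpha2_pos {k : ℕ} {α1 α2 : ℕ → ℕ}
    (h3 : ∀ j ∈ Finset.Icc 2 k, α2 j + ∑ i ∈ Finset.Icc 2 (j - 1), α2 i ≤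
        ∑ i ∈ Finset.Icc 2 (j - 1), α1 i)
    (hpos : ∑ i ∈ Finset.Icc 2 k, α2 i ≠ 0) : 1 ≤ ∑ i ∈ Finset.Icc 2 k, α1 i := by
  obtain ⟨j, hj, hne⟩ := Finset.exists_ne_zero_of_sum_ne_zero hpos
  have h := h3 j hj
  simp only [Finset.mem_Icc] at hj
  have hsub : ∑ i ∈ Finset.Icc 2 (j - 1), α1 i ≤ ∑ i ∈ Finset.Icc 2 k, α1 i :=
    Finset.sum_le_sum_of_subset (Finset.Icc_subset_Icc_right (by omega))
  omega

lemma alpha1_pos {k : ℕ} {a α1 α2 : ℕ → ℕ}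
    (h : ∀ j ∈ Finset.Icc 2 k, α1 j + α2 j ≤ 2 * a j ∧
        α1 j + ∑ i ∈ Finset.Icc 2 (j - 1), (2 * α1 i + α2 i) ≤
          ∑ i ∈ Finset.Icc 1 (j - 1), 2 * a i)
    (hpos : ∑ i ∈ Finset.Icc 2 k, α1 i ≠ 0) : 2 ≤ ∑ i ∈ Finset.Icc 1 k, a i := by
  obtain ⟨j, hj, hne⟩ := Finset.exists_ne_zero_of_sum_ne_zero hpos
  simp only [Finset.mem_Icc] at hj
  obtain ⟨m, rfl⟩ : ∃ m, j = m + 1 := ⟨j - 1, by omega⟩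
  obtain ⟨h1, h2⟩ := h (m + 1) (by simp only [Finset.mem_Icc]; omega)
  rw [Nat.add_sub_cancel, ← Finset.mul_sum] at h2
  have hchain : ∑ i ∈ Finset.Icc 1 (m + 1), a i ≤ ∑ i ∈ Finset.Icc 1 k, a i :=
    Finset.sum_le_sum_of_subset (Finset.Icc_subset_Icc_right (by omega))
  rw [Finset.sum_Icc_succ_top (show 1 ≤ m + 1 by omega)] at hchain
  omega

def hdelta (i : ℕ) : ℕ → ℕ := fun n => if n = i then 1 else 0

lemma sum_eq_one {k : ℕ} {a : ℕ → ℕ} (h0 : ∀ i, i = 0 ∨ k < i → a i = 0)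
    (h : ∑ i ∈ Finset.Icc 1 k, a i = 1) :
    ∃ i0 ∈ Finset.Icc 1 k, a = hdelta i0 := by
  have hex : ∃ i0 ∈ Finset.Icc 1 k, a i0 ≠ 0 := by
    by_contra hc
    push_neg at hc
    rw [Finset.sum_eq_zero hc] at h
    omega
  obtain ⟨i0, hi0, hne⟩ := hex
  refine ⟨i0, hi0, funext fun n => ?_⟩
  unfold hdelta
  by_cases hn : n = i0
  · subst hn
    have := Finset.single_le_sum (f := a) (fun i _ => Nat.zero_le _) hi0
    rw [if_pos rfl]
    omega
  · rw [if_neg hn]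
    by_cases hmem : n ∈ Finset.Icc 1 k
    · have hsub : ({n, i0} : Finset ℕ) ⊆ Finset.Icc 1 k := by
        intro x hx
        simp only [Finset.mem_insert, Finset.mem_singleton] at hx
        rcases hx with rfl | rfl <;> assumption
      have := Finset.sum_le_sum_of_subset (f := a) hsub
      rw [Finset.sum_pair hn] at this
      omega
    · exact h0 n (by simp only [Finset.mem_Icc] at hmem; omega)

lemma fun_eq_zero {k : ℕ} {f : ℕ → ℕ} (h0 : ∀ i, i ≤ 1 ∨ k < i → f i = 0)
    (hs : ∑ i ∈ Finset.Icc 2 k, f i = 0) : f = fun _ => 0 := by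
  funext n
  by_cases hn : n ∈ Finset.Icc 2 k
  · exact Finset.sum_eq_zero_iff.mp hs n hn
  · exact h0 n (by simp only [Finset.mem_Icc] at hn; omega)

lemma hecke_one_empty {k : ℕ} (hk : 1 ≤ k) : heckeEulerSolutions k 1 = ∅ := by
  rw [Set.eq_empty_iff_forall_notMem]
  rintro ⟨a, α1, α2, b, β1, β2⟩ hmem
  rw [hecke_mem_iff] at hmem
  obtain ⟨hs1, hs2, hsum, h4, hm1, hm2⟩ := hmem
  rw [Finset.sum_add_distrib] at hsum
  have hα := hecke_cumul (fun j hj => ⟨(h4 j hj).1, (h4 j hj).2.1⟩) k hk le_rfl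
  have hβ := hecke_cumul (fun j hj => ⟨(h4 j hj).2.2.2.1, (h4 j hj).2.2.2.2.1⟩) k hk le_rfl
  simp only [Finset.sum_add_distrib, ← Finset.mul_sum] at hα hβ hm1
  omega

lemma hecke_card_one {k : ℕ} (hk : 1 ≤ k) : Nat.card ↥(heckeEulerSolutions k 1) = 0 := by
  rw [hecke_one_empty hk]
  simp

lemma hecke_var_bound {k r : ℕ} {a α1 α2 b β1 β2 : ℕ → ℕ}
    (hk : 1 ≤ k)
    (h : (a, α1, α2, b, β1, β2) ∈ heckeEulerSolutions k r) :
    ∀ n, a n ≤ r ∧ b n ≤ r ∧ α1 n ≤ r ∧ α2 n ≤ r ∧ β1 n ≤ r ∧ β2 n ≤ r := by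
  rw [hecke_mem_iff] at h
  obtain ⟨hs1, hs2, hsum, h4, hm1, hm2⟩ := h
  have hr : (∑ i ∈ Finset.Icc 1 k, a i) + ∑ i ∈ Finset.Icc 1 k, b i = r := by
    rw [← Finset.sum_add_distrib]; exact hsum
  have hα := hecke_cumul (fun j hj => ⟨(h4 j hj).1, (h4 j hj).2.1⟩) k hk le_rfl
  have hβ := hecke_cumul (fun j hj => ⟨(h4 j hj).2.2.2.1, (h4 j hj).2.2.2.2.1⟩) k hk le_rfl
  simp only [Finset.sum_add_distrib, ← Finset.mul_sum] at hα hβ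
  intro n
  rcases Nat.lt_or_ge n 1 with hn | hn
  · obtain ⟨e1, e2⟩ := hs1 n (Or.inl (by omega))
    obtain ⟨e3, e4, e5, e6⟩ := hs2 n (Or.inl (by omega))
    omega
  rcases Nat.lt_or_ge k n with hkn | hkn
  · obtain ⟨e1, e2⟩ := hs1 n (Or.inr hkn)
    obtain ⟨e3, e4, e5, e6⟩ := hs2 n (Or.inr hkn)
    omega
  -- 1 ≤ n ≤ k
  have hab : a n + b n ≤ r := by
    have h1 : a n + b n ≤ ∑ i ∈ Finset.Icc 1 k, (a i + b i) :=
      Finset.single_le_sum (f := fun i => a i + b i) (fun i _ => Nat.zero_le _)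
        (Finset.mem_Icc.mpr ⟨hn, hkn⟩)
    omega
  rcases Nat.lt_or_ge n 2 with hn2 | hn2
  · obtain ⟨e3, e4, e5, e6⟩ := hs2 n (Or.inl (by omega))
    omega
  -- 2 ≤ n ≤ k
  have hmem2 : n ∈ Finset.Icc 2 k := Finset.mem_Icc.mpr ⟨hn2, hkn⟩
  have hα1 : 2 * α1 n + α2 n ≤ ∑ i ∈ Finset.Icc 2 k, (2 * α1 i + α2 i) :=
    Finset.single_le_sum (f := fun i => 2 * α1 i + α2 i) (fun i _ => Nat.zero_le _) hmem2
  have hβ1 : 2 * β1 n + β2 n ≤ ∑ i ∈ Finset.Icc 2 k, (2 * β1 i + β2 i) :=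
    Finset.single_le_sum (f := fun i => 2 * β1 i + β2 i) (fun i _ => Nat.zero_le _) hmem2
  simp only [Finset.sum_add_distrib, ← Finset.mul_sum] at hα1 hβ1
  have hα2 := (h4 n hmem2).2.2.1
  have hβ2 := (h4 n hmem2).2.2.2.2.2
  have hsubα : ∑ i ∈ Finset.Icc 2 (n - 1), α1 i ≤ ∑ i ∈ Finset.Icc 2 k, α1 i :=
    Finset.sum_le_sum_of_subset (Finset.Icc_subset_Icc_right (by omega))
  have hsubβ : ∑ i ∈ Finset.Icc 2 (n - 1), β1 i ≤ ∑ i ∈ Finset.Icc 2 k, β1 i :=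
    Finset.sum_le_sum_of_subset (Finset.Icc_subset_Icc_right (by omega))
  omega

lemma hecke_card_le {k : ℕ} (hk : 1 ≤ k) (r : ℕ) :
    Nat.card ↥(heckeEulerSolutions k r) ≤ (r + 1) ^ (6 * k) := by
  classical
  let e : ℕ → Fin (r + 1) := fun m => ⟨min m r, by omega⟩
  let emb : (ℕ → ℕ) → (Fin k → Fin (r + 1)) := fun f i => e (f (i + 1))
  let F := ((Fin k → Fin (r + 1)) × (Fin k → Fin (r + 1)) × (Fin k → Fin (r + 1)) ×
    (Fin k → Fin (r + 1)) × (Fin k → Fin (r + 1)) × (Fin k → Fin (r + 1)))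
  have key : ∀ {f f' : ℕ → ℕ}, (∀ n, f n ≤ r) → (∀ n, f' n ≤ r) →
      (∀ n, n = 0 ∨ k < n → f n = 0) → (∀ n, n = 0 ∨ k < n → f' n = 0) →
      emb f = emb f' → f = f' := by
    intro f f' hb hb' h0 h0' h
    funext n
    rcases Nat.lt_or_ge n 1 with hn | hn
    · rw [h0 n (Or.inl (by omega)), h0' n (Or.inl (by omega))]
    rcases Nat.lt_or_ge k n with hkn | hkn
    · rw [h0 n (Or.inr hkn), h0' n (Or.inr hkn)]
    have := congrFun h ⟨n - 1, by omega⟩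
    simp only [emb, e, Fin.mk.injEq] at this
    rw [show n - 1 + 1 = n by omega] at this
    have := hb n
    have := hb' n
    omega
  have hinj : Function.Injective (fun x : ↥(heckeEulerSolutions k r) =>
      ((emb x.1.1, emb x.1.2.1, emb x.1.2.2.1, emb x.1.2.2.2.1, emb x.1.2.2.2.2.1,
        emb x.1.2.2.2.2.2) : F)) := by
    rintro ⟨⟨a, α1, α2, b, β1, β2⟩, hx⟩ ⟨⟨a', α1', α2', b', β1', β2'⟩, hy⟩ h
    simp only [Prod.mk.injEq] at h
    obtain ⟨h1, h2, h3, h4, h5, h6⟩ := h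
    have bx := hecke_var_bound hk hx
    have by' := hecke_var_bound hk hy
    have sx := (hecke_mem_iff.mp hx)
    have sy := (hecke_mem_iff.mp hy)
    apply Subtype.ext
    simp only [Prod.mk.injEq]
    refine ⟨?_, ?_, ?_, ?_, ?_, ?_⟩
    · exact key (fun n => (bx n).1) (fun n => (by' n).1)
        (fun n hn => (sx.1 n hn).1) (fun n hn => (sy.1 n hn).1) h1
    · exact key (fun n => (bx n).2.2.1) (fun n => (by' n).2.2.1)
        (fun n hn => (sx.2.1 n (by omega)).1) (fun n hn => (sy.2.1 n (by omega)).1) h2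
    · exact key (fun n => (bx n).2.2.2.1) (fun n => (by' n).2.2.2.1)
        (fun n hn => (sx.2.1 n (by omega)).2.1) (fun n hn => (sy.2.1 n (by omega)).2.1) h3
    · exact key (fun n => (bx n).2.1) (fun n => (by' n).2.1)
        (fun n hn => (sx.1 n hn).2) (fun n hn => (sy.1 n hn).2) h4
    · exact key (fun n => (bx n).2.2.2.2.1) (fun n => (by' n).2.2.2.2.1)
        (fun n hn => (sx.2.1 n (by omega)).2.2.1) (fun n hn => (sy.2.1 n (by omega)).2.2.1) h5
    · exact key (fun n => (bx n).2.2.2.2.2) (fun n => (by' n).2.2.2.2.2)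
        (fun n hn => (sx.2.1 n (by omega)).2.2.2) (fun n hn => (sy.2.1 n (by omega)).2.2.2) h6
  calc Nat.card ↥(heckeEulerSolutions k r) ≤ Nat.card F :=
        Nat.card_le_card_of_injective _ hinj
    _ = (r + 1) ^ (6 * k) := by
        simp only [F, Nat.card_eq_fintype_card, Fintype.card_prod, Fintype.card_fun,
          Fintype.card_fin]
        rw [show 6 * k = k + (k + (k + (k + (k + k)))) by ring]
        rw [pow_add, pow_add, pow_add, pow_add, pow_add]

lemma hdelta_mem {k : ℕ} {i0 j0 : ℕ} (hi0 : i0 ∈ Finset.Icc 1 k) (hj0 : j0 ∈ Finset.Icc 1 k) :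
    ((hdelta i0, fun _ => 0, fun _ => 0, hdelta j0, fun _ => 0, fun _ => 0) :
      (ℕ → ℕ) × (ℕ → ℕ) × (ℕ → ℕ) × (ℕ → ℕ) × (ℕ → ℕ) × (ℕ → ℕ)) ∈
      heckeEulerSolutions k 2 := by
  rw [hecke_mem_iff]
  have hi0' := Finset.mem_Icc.mp hi0
  have hj0' := Finset.mem_Icc.mp hj0
  refine ⟨?_, ?_, ?_, ?_, ?_, ?_⟩
  · intro i hi
    constructor <;> · simp only [hdelta, ite_eq_right_iff]; omega
  · intro i hi
    exact ⟨rfl, rfl, rfl, rfl⟩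
  · rw [Finset.sum_add_distrib]
    simp [hdelta, Finset.sum_ite_eq', Finset.mem_Icc, hi0'.1, hi0'.2, hj0'.1, hj0'.2]
  · intro j hj
    simp
  · simp [hdelta, mul_ite, Finset.sum_ite_eq', Finset.mem_Icc, hi0'.1, hi0'.2, hj0'.1, hj0'.2]
  · simp

lemma hdelta_inj : Function.Injective hdelta := by
  intro i i' h
  by_contra hne
  have := congrFun h i
  simp [hdelta, hne] at this

lemma hecke_two_eq {k : ℕ} (hk : 1 ≤ k) :
    heckeEulerSolutions k 2 =
      (fun p : ℕ × ℕ =>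
        ((hdelta p.1, fun _ => 0, fun _ => 0, hdelta p.2, fun _ => 0, fun _ => 0) :
          (ℕ → ℕ) × (ℕ → ℕ) × (ℕ → ℕ) × (ℕ → ℕ) × (ℕ → ℕ) × (ℕ → ℕ))) ''
        ↑(Finset.Icc 1 k ×ˢ Finset.Icc 1 k) := by
  apply Set.Subset.antisymm
  · rintro ⟨a, α1, α2, b, β1, β2⟩ hmem
    rw [hecke_mem_iff] at hmem
    obtain ⟨hs1, hs2, hsum, h4, hm1, hm2⟩ := hmem
    rw [Finset.sum_add_distrib] at hsum
    have hα := hecke_cumul (fun j hj => ⟨(h4 j hj).1, (h4 j hj).2.1⟩) k hk le_rfl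
    have hβ := hecke_cumul (fun j hj => ⟨(h4 j hj).2.2.2.1, (h4 j hj).2.2.2.2.1⟩) k hk le_rfl
    simp only [Finset.sum_add_distrib, ← Finset.mul_sum] at hα hβ hm1
    have gA2 := fun h => alpha2_pos (fun j hj => (h4 j hj).2.2.1) h
    have gB2 := fun h => alpha2_pos (fun j hj => (h4 j hj).2.2.2.2.2) h
    have gA1 := fun h => alpha1_pos (fun j hj => ⟨(h4 j hj).1, (h4 j hj).2.1⟩) h
    have gB1 := fun h => alpha1_pos (fun j hj => ⟨(h4 j hj).2.2.2.1, (h4 j hj).2.2.2.2.1⟩) h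
    have hSa : ∑ i ∈ Finset.Icc 1 k, a i = 1 := by omega
    have hSb : ∑ i ∈ Finset.Icc 1 k, b i = 1 := by omega
    have hA1 : ∑ i ∈ Finset.Icc 2 k, α1 i = 0 := by omega
    have hA2 : ∑ i ∈ Finset.Icc 2 k, α2 i = 0 := by omega
    have hB1 : ∑ i ∈ Finset.Icc 2 k, β1 i = 0 := by omega
    have hB2 : ∑ i ∈ Finset.Icc 2 k, β2 i = 0 := by omega
    obtain ⟨i0, hi0, ha⟩ := sum_eq_one (fun i hi => (hs1 i hi).1) hSa
    obtain ⟨j0, hj0, hb⟩ := sum_eq_one (fun i hi => (hs1 i hi).2) hSb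
    have hα1 := fun_eq_zero (fun i hi => (hs2 i hi).1) hA1
    have hα2 := fun_eq_zero (fun i hi => (hs2 i hi).2.1) hA2
    have hβ1 := fun_eq_zero (fun i hi => (hs2 i hi).2.2.1) hB1
    have hβ2 := fun_eq_zero (fun i hi => (hs2 i hi).2.2.2) hB2
    exact ⟨(i0, j0), Finset.mem_coe.mpr (Finset.mem_product.mpr ⟨hi0, hj0⟩),
      by rw [ha, hb, hα1, hα2, hβ1, hβ2]⟩
  · rintro t ⟨⟨i0, j0⟩, hmem, rfl⟩
    rw [Finset.mem_coe, Finset.mem_product] at hmem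
    exact hdelta_mem hmem.1 hmem.2

lemma hecke_card_two {k : ℕ} (hk : 1 ≤ k) :
    Nat.card ↥(heckeEulerSolutions k 2) = k ^ 2 := by
  have hinj : Function.Injective (fun p : ℕ × ℕ =>
      ((hdelta p.1, fun _ => 0, fun _ => 0, hdelta p.2, fun _ => 0, fun _ => 0) :
        (ℕ → ℕ) × (ℕ → ℕ) × (ℕ → ℕ) × (ℕ → ℕ) × (ℕ → ℕ) × (ℕ → ℕ))) := by
    rintro ⟨i, j⟩ ⟨i', j'⟩ h
    simp only [Prod.mk.injEq] at h ⊢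
    exact ⟨hdelta_inj h.1, hdelta_inj h.2.2.2.1⟩
  rw [hecke_two_eq hk, Nat.card_coe_set_eq, Set.ncard_image_of_injective _ hinj,
    Set.ncard_coe_finset, Finset.card_product, Nat.card_Icc]
  simp [pow_two]

/-- the Euler-product coefficients `c_r = #heckeEulerSolutions k r`
satisfy `c_1 = 0`, `c_2 = k²`, and `c_r ≤ (r+1)^{6k}` for all `r`; hence each local factor
equals `1 + k² p^{-1-2s} + O_k(p^{-3(1/2+Re s)})`. -/
theorem euler_factor_coefficients (k : ℕ) (hk : 1 ≤ k) :
    Nat.card ↥(heckeEulerSolutions k 1) = 0 ∧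
    Nat.card ↥(heckeEulerSolutions k 2) = k ^ 2 ∧
    ∀ r : ℕ, Nat.card ↥(heckeEulerSolutions k r) ≤ (r + 1) ^ (6 * k) := by
  exact ⟨hecke_card_one hk, hecke_card_two hk, hecke_card_le hk⟩
end
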